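/- arXiv:2503.07978 — 8 statements merged into one kernel-verified Lean document; each statement's English description precedes it below -/
import Mathlib

section
/- Let n, m, d be natural numbers with n > 2m and d ≥ 1, let Δ_1, …, Δ_n ∈ ℝ^d, let B ⊆ {1,…,n} be a 'benign set' with |B| = n − m, and let S be a nonempty subset of B with |S| ≥ n − 2m. If (1/|B|) · Σ_{i∈B} ‖Δ_i − Δ̄_B‖² ≤ D for a real number D, then ‖(1/|S|) · Σ_{i∈S} Δ_i − Δ̄_B‖² ≤ ((n − m)/(n − 2m)) · D. (This is the case S ⊆ B in the proof of the κ-robustness of AlignIns.) -/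
open Finset

/-- Case `S ⊆ B` in the proof of κ-robustness of AlignIns: if the average squared
deviation of benign updates from their mean is at most `D`, then the squared distance
between the average over a selected subset `S ⊆ B` (with `|S| ≥ n - 2m`) and the
benign average is at most `((n-m)/(n-2m)) · D`. -/
theorem alignins_subset_case
    (n m d : ℕ) (hnm : n > 2 * m) (hd : 1 ≤ d)
    (Δ : Fin n → EuclideanSpace ℝ (Fin d))
    (B S : Finset (Fin n))
    (hB : B.card = n - m)
    (hSB : S ⊆ B) (hSne : S.Nonempty) (hScard : n - 2 * m ≤ S.card)
    (D : ℝ)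
    (hdiv : (B.card : ℝ)⁻¹ * ∑ i ∈ B, ‖Δ i - (B.card : ℝ)⁻¹ • ∑ j ∈ B, Δ j‖ ^ 2 ≤ D) :
    ‖(S.card : ℝ)⁻¹ • ∑ i ∈ S, Δ i - (B.card : ℝ)⁻¹ • ∑ j ∈ B, Δ j‖ ^ 2
      ≤ (((n : ℝ) - m) / ((n : ℝ) - 2 * m)) * D := by
  set μ := (B.card : ℝ)⁻¹ • ∑ j ∈ B, Δ j with hμ
  have hm : 2 * m < n := hnm
  have hs0 : 0 < S.card := hSne.card_pos
  have hs : (0 : ℝ) < S.card := by exact_mod_cast hs0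
  have hb0 : 0 < B.card := by omega
  have hb : (0 : ℝ) < B.card := by exact_mod_cast hb0
  have hBcast : (B.card : ℝ) = (n : ℝ) - m := by
    rw [hB]; push_cast [Nat.cast_sub (by omega : m ≤ n)]; ring
  have hScast : ((n : ℝ) - 2 * m) ≤ (S.card : ℝ) := by
    have : ((n - 2 * m : ℕ) : ℝ) ≤ (S.card : ℝ) := by exact_mod_cast hScard
    rwa [Nat.cast_sub (by omega : 2 * m ≤ n), Nat.cast_mul, Nat.cast_ofNat] at this
  have hnm2 : (0 : ℝ) < (n : ℝ) - 2 * m := by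
    have : ((2 * m : ℕ) : ℝ) < (n : ℕ) := by exact_mod_cast hm
    push_cast at this; linarith
  -- rewrite the average difference
  have key : (S.card : ℝ)⁻¹ • ∑ i ∈ S, Δ i - μ
      = (S.card : ℝ)⁻¹ • ∑ i ∈ S, (Δ i - μ) := by
    rw [Finset.sum_sub_distrib, Finset.sum_const, smul_sub]
    congr 1
    rw [← Nat.cast_smul_eq_nsmul ℝ, smul_smul, inv_mul_cancel₀ hs.ne', one_smul]
  rw [key]
  have hD0 : 0 ≤ D := le_trans (by positivity) hdiv
  have hsumB : ∑ i ∈ B, ‖Δ i - μ‖ ^ 2 ≤ (B.card : ℝ) * D := by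
    rwa [inv_mul_le_iff₀ hb] at hdiv
  have hsumS : ∑ i ∈ S, ‖Δ i - μ‖ ^ 2 ≤ (B.card : ℝ) * D :=
    le_trans (Finset.sum_le_sum_of_subset_of_nonneg hSB (fun i _ _ => by positivity)) hsumB
  have h1 : ‖(S.card : ℝ)⁻¹ • ∑ i ∈ S, (Δ i - μ)‖ ^ 2
      = (S.card : ℝ)⁻¹ ^ 2 * ‖∑ i ∈ S, (Δ i - μ)‖ ^ 2 := by
    rw [norm_smul, mul_pow, Real.norm_eq_abs, sq_abs]
  rw [h1]
  have h2 : ‖∑ i ∈ S, (Δ i - μ)‖ ^ 2 ≤ (S.card : ℝ) * ∑ i ∈ S, ‖Δ i - μ‖ ^ 2 := by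
    calc ‖∑ i ∈ S, (Δ i - μ)‖ ^ 2 ≤ (∑ i ∈ S, ‖Δ i - μ‖) ^ 2 := by
          gcongr; exact norm_sum_le _ _
      _ ≤ (S.card : ℝ) * ∑ i ∈ S, ‖Δ i - μ‖ ^ 2 := by
          exact_mod_cast sq_sum_le_card_mul_sum_sq (s := S) (f := fun i => ‖Δ i - μ‖)
  have h3 : (S.card : ℝ)⁻¹ ^ 2 * ‖∑ i ∈ S, (Δ i - μ)‖ ^ 2
      ≤ (S.card : ℝ)⁻¹ ^ 2 * ((S.card : ℝ) * ((B.card : ℝ) * D)) := by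
    gcongr
    exact h2.trans (by gcongr)
  refine h3.trans ?_
  have : (S.card : ℝ)⁻¹ ^ 2 * ((S.card : ℝ) * ((B.card : ℝ) * D))
      = ((B.card : ℝ) / (S.card : ℝ)) * D := by
    field_simp
  rw [this, hBcast]
  gcongr
  · linarith
end

section
/- Let d ≥ 1 and let Δ_1, …, Δ_n ∈ ℝ^d. Let B ⊆ {1,…,n} be nonempty, let S ⊆ {1,…,n} be such that P := S ∩ B is nonempty, and set R := S \ B. Let ε > 0 be a real number with |R|/|P| ≤ 1/ε, let c ≥ 0 satisfy ‖Δ_i‖ ≤ c for every i ∈ S, and suppose (1/|B|) · Σ_{i∈B} ‖Δ_i − Δ̄_B‖² ≤ D for a real number D. Then ‖(1/|S|) · Σ_{i∈S} Δ_i − Δ̄_B‖² ≤ (|B|/|S|) · (2/ε + 1) · D + 8·|R|·c²/|S|. (This is the case S ⊄ B in the proof of the κ-robustness of AlignIns.) -/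
set_option maxHeartbeats 1000000


open Finset

/-- Case `S ⊄ B` in the proof of κ-robustness of AlignIns: with `P := S ∩ B` nonempty,
`R := S \ B`, `|R|/|P| ≤ 1/ε`, all selected updates bounded in norm by `c`, and benign
divergence at most `D`, the squared distance between the selected average and the benign
average is at most `(|B|/|S|)·(2/ε + 1)·D + 8|R|c²/|S|`. -/
theorem alignins_nonsubset_case
    (n d : ℕ) (hd : 1 ≤ d)
    (Δ : Fin n → EuclideanSpace ℝ (Fin d))
    (B S : Finset (Fin n))
    (hBne : B.Nonempty) (hPne : (S ∩ B).Nonempty)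
    (ε : ℝ) (hε : 0 < ε)
    (hratio : ((S \ B).card : ℝ) / ((S ∩ B).card : ℝ) ≤ 1 / ε)
    (c : ℝ) (hc : 0 ≤ c) (hbound : ∀ i ∈ S, ‖Δ i‖ ≤ c)
    (D : ℝ)
    (hdiv : (B.card : ℝ)⁻¹ * ∑ i ∈ B, ‖Δ i - (B.card : ℝ)⁻¹ • ∑ j ∈ B, Δ j‖ ^ 2 ≤ D) :
    ‖(S.card : ℝ)⁻¹ • ∑ i ∈ S, Δ i - (B.card : ℝ)⁻¹ • ∑ j ∈ B, Δ j‖ ^ 2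
      ≤ ((B.card : ℝ) / (S.card : ℝ)) * (2 / ε + 1) * D
        + 8 * ((S \ B).card : ℝ) * c ^ 2 / (S.card : ℝ) := by
  classical
  set μ : EuclideanSpace ℝ (Fin d) := (B.card : ℝ)⁻¹ • ∑ j ∈ B, Δ j with hμ
  have hSne : S.Nonempty := by
    obtain ⟨i, hi⟩ := hPne
    exact ⟨i, (Finset.mem_inter.mp hi).1⟩
  have hScard : (0 : ℝ) < S.card := by exact_mod_cast Finset.card_pos.mpr hSne
  have hBcard : (0 : ℝ) < B.card := by exact_mod_cast Finset.card_pos.mpr hBne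
  have hPcard : (0 : ℝ) < (S ∩ B).card := by exact_mod_cast Finset.card_pos.mpr hPne
  have hD : 0 ≤ D := le_trans (by positivity) hdiv
  have hT : ∑ i ∈ B, ‖Δ i - μ‖ ^ 2 ≤ (B.card : ℝ) * D := by
    calc ∑ i ∈ B, ‖Δ i - μ‖ ^ 2
        = (B.card : ℝ) * ((B.card : ℝ)⁻¹ * ∑ i ∈ B, ‖Δ i - μ‖ ^ 2) := by
          field_simp
      _ ≤ (B.card : ℝ) * D := by
          exact mul_le_mul_of_nonneg_left hdiv hBcard.le
  -- rewrite the average difference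
  have key : (S.card : ℝ)⁻¹ • ∑ i ∈ S, Δ i - μ
      = (S.card : ℝ)⁻¹ • ∑ i ∈ S, (Δ i - μ) := by
    rw [Finset.sum_sub_distrib, smul_sub, Finset.sum_const]
    congr 1
    rw [← Nat.cast_smul_eq_nsmul ℝ, smul_smul, inv_mul_cancel₀ (ne_of_gt hScard), one_smul]
  rw [key]
  have hCS : ‖∑ i ∈ S, (Δ i - μ)‖ ^ 2 ≤ (S.card : ℝ) * ∑ i ∈ S, ‖Δ i - μ‖ ^ 2 := by
    calc ‖∑ i ∈ S, (Δ i - μ)‖ ^ 2 ≤ (∑ i ∈ S, ‖Δ i - μ‖) ^ 2 := by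
          apply pow_le_pow_left₀ (norm_nonneg _) (norm_sum_le _ _)
      _ ≤ (S.card : ℝ) * ∑ i ∈ S, ‖Δ i - μ‖ ^ 2 := by
          have h := sq_sum_le_card_mul_sum_sq (s := S) (f := fun i => ‖Δ i - μ‖)
          exact_mod_cast h
  -- bound on P-part
  have hPpart : ∑ i ∈ S ∩ B, ‖Δ i - μ‖ ^ 2 ≤ (B.card : ℝ) * D :=
    le_trans (Finset.sum_le_sum_of_subset_of_nonneg (Finset.inter_subset_right)
      (fun i _ _ => by positivity)) hT
  -- bound on each R element
  have hRelem : ∀ i ∈ S \ B, ‖Δ i - μ‖ ^ 2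
      ≤ 8 * c ^ 2 + 2 / ((S ∩ B).card : ℝ) * ((B.card : ℝ) * D) := by
    intro i hi
    have hiS : i ∈ S := (Finset.mem_sdiff.mp hi).1
    have step : ∀ j ∈ S ∩ B, ‖Δ i - μ‖ ^ 2 ≤ 8 * c ^ 2 + 2 * ‖Δ j - μ‖ ^ 2 := by
      intro j hj
      have hjS : j ∈ S := (Finset.mem_inter.mp hj).1
      have h1 : ‖Δ i - μ‖ ≤ ‖Δ i - Δ j‖ + ‖Δ j - μ‖ := norm_sub_le_norm_sub_add_norm_sub _ _ _
      have h2 : ‖Δ i - Δ j‖ ≤ 2 * c := by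
        calc ‖Δ i - Δ j‖ ≤ ‖Δ i‖ + ‖Δ j‖ := norm_sub_le _ _
          _ ≤ 2 * c := by linarith [hbound i hiS, hbound j hjS]
      nlinarith [norm_nonneg (Δ i - μ), norm_nonneg (Δ j - μ), norm_nonneg (Δ i - Δ j),
        sq_nonneg (‖Δ i - Δ j‖ - ‖Δ j - μ‖)]
    -- average over j ∈ S ∩ B
    have hsum : ((S ∩ B).card : ℝ) * ‖Δ i - μ‖ ^ 2
        ≤ ((S ∩ B).card : ℝ) * (8 * c ^ 2) + 2 * ∑ j ∈ S ∩ B, ‖Δ j - μ‖ ^ 2 := by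
      have := Finset.sum_le_sum step
      simp only [Finset.sum_const, Finset.sum_add_distrib, nsmul_eq_mul,
        ← Finset.mul_sum] at this ⊢
      linarith
    have hsum2 : 2 * ∑ j ∈ S ∩ B, ‖Δ j - μ‖ ^ 2 ≤ 2 * ((B.card : ℝ) * D) := by linarith
    have hle : ((S ∩ B).card : ℝ) * ‖Δ i - μ‖ ^ 2
        ≤ ((S ∩ B).card : ℝ) * (8 * c ^ 2) + 2 * ((B.card : ℝ) * D) := by linarith
    refine (mul_le_mul_iff_right₀ hPcard).mp ?_
    have hx : ((S ∩ B).card : ℝ) * (8 * c ^ 2 + 2 / ((S ∩ B).card : ℝ) * ((B.card : ℝ) * D))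
        = ((S ∩ B).card : ℝ) * (8 * c ^ 2) + 2 * ((B.card : ℝ) * D) := by
      field_simp
    rw [hx]; exact hle
  have hRpart : ∑ i ∈ S \ B, ‖Δ i - μ‖ ^ 2
      ≤ ((S \ B).card : ℝ) * (8 * c ^ 2 + 2 / ((S ∩ B).card : ℝ) * ((B.card : ℝ) * D)) := by
    calc ∑ i ∈ S \ B, ‖Δ i - μ‖ ^ 2
        ≤ ∑ i ∈ S \ B, (8 * c ^ 2 + 2 / ((S ∩ B).card : ℝ) * ((B.card : ℝ) * D)) :=
          Finset.sum_le_sum hRelem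
      _ = _ := by rw [Finset.sum_const, nsmul_eq_mul]
  have hsplit : ∑ i ∈ S, ‖Δ i - μ‖ ^ 2
      = ∑ i ∈ S ∩ B, ‖Δ i - μ‖ ^ 2 + ∑ i ∈ S \ B, ‖Δ i - μ‖ ^ 2 :=
    (Finset.sum_inter_add_sum_sdiff S B _).symm
  have hmain : ∑ i ∈ S, ‖Δ i - μ‖ ^ 2
      ≤ (B.card : ℝ) * D + ((S \ B).card : ℝ) * (8 * c ^ 2 + 2 / ((S ∩ B).card : ℝ) * ((B.card : ℝ) * D)) := by
    rw [hsplit]; exact add_le_add hPpart hRpart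
  -- ratio bound: |R| * 2/|P| ≤ 2/ε
  have hratio' : ((S \ B).card : ℝ) * (2 / ((S ∩ B).card : ℝ)) ≤ 2 / ε := by
    calc ((S \ B).card : ℝ) * (2 / ((S ∩ B).card : ℝ))
        = 2 * (((S \ B).card : ℝ) / ((S ∩ B).card : ℝ)) := by ring
      _ ≤ 2 * (1 / ε) := by linarith
      _ = 2 / ε := by ring
  have hnorm : ‖(S.card : ℝ)⁻¹ • ∑ i ∈ S, (Δ i - μ)‖ ^ 2
      = (S.card : ℝ)⁻¹ ^ 2 * ‖∑ i ∈ S, (Δ i - μ)‖ ^ 2 := by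
    rw [norm_smul]
    rw [Real.norm_eq_abs, abs_of_pos (by positivity), mul_pow]
  rw [hnorm]
  have h1 : (S.card : ℝ)⁻¹ ^ 2 * ‖∑ i ∈ S, (Δ i - μ)‖ ^ 2
      ≤ (S.card : ℝ)⁻¹ * ∑ i ∈ S, ‖Δ i - μ‖ ^ 2 := by
    calc (S.card : ℝ)⁻¹ ^ 2 * ‖∑ i ∈ S, (Δ i - μ)‖ ^ 2
        ≤ (S.card : ℝ)⁻¹ ^ 2 * ((S.card : ℝ) * ∑ i ∈ S, ‖Δ i - μ‖ ^ 2) :=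
          mul_le_mul_of_nonneg_left hCS (by positivity)
      _ = (S.card : ℝ)⁻¹ * ∑ i ∈ S, ‖Δ i - μ‖ ^ 2 := by
          field_simp
  refine le_trans h1 ?_
  have h2 : (S.card : ℝ)⁻¹ * ∑ i ∈ S, ‖Δ i - μ‖ ^ 2
      ≤ (S.card : ℝ)⁻¹ * ((B.card : ℝ) * D + ((S \ B).card : ℝ) * (8 * c ^ 2 + 2 / ((S ∩ B).card : ℝ) * ((B.card : ℝ) * D))) :=
    mul_le_mul_of_nonneg_left hmain (by positivity)
  refine le_trans h2 ?_
  have hfinal : (B.card : ℝ) * D + ((S \ B).card : ℝ) * (8 * c ^ 2 + 2 / ((S ∩ B).card : ℝ) * ((B.card : ℝ) * D))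
      ≤ (B.card : ℝ) * (2 / ε + 1) * D + 8 * ((S \ B).card : ℝ) * c ^ 2 := by
    have : ((S \ B).card : ℝ) * (2 / ((S ∩ B).card : ℝ)) * ((B.card : ℝ) * D) ≤ 2 / ε * ((B.card : ℝ) * D) :=
      mul_le_mul_of_nonneg_right hratio' (by positivity)
    nlinarith
  calc (S.card : ℝ)⁻¹ * ((B.card : ℝ) * D + ((S \ B).card : ℝ) * (8 * c ^ 2 + 2 / ((S ∩ B).card : ℝ) * ((B.card : ℝ) * D)))
      ≤ (S.card : ℝ)⁻¹ * ((B.card : ℝ) * (2 / ε + 1) * D + 8 * ((S \ B).card : ℝ) * c ^ 2) :=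
        mul_le_mul_of_nonneg_left hfinal (by positivity)
    _ = ((B.card : ℝ) / (S.card : ℝ)) * (2 / ε + 1) * D + 8 * ((S \ B).card : ℝ) * c ^ 2 / (S.card : ℝ) := by
        field_simp
end

section
/- Lemma 1 (κ-robustness of AlignIns, deterministic core). Let ε > 0 be real, let n, m be naturals with n > 1 and 0 ≤ m < n/(3 + ε), and let d ≥ 1. Let Δ_1, …, Δ_n ∈ ℝ^d, let B ⊆ {1,…,n} with |B| = n − m, and let S ⊆ {1,…,n} be nonempty with |S| ≥ n − 2m. Suppose there is c ≥ 0 with ‖Δ_i‖ ≤ c for every i ∈ S, and there are reals ν̄, ζ̄ ≥ 0 with (1/|B|) · Σ_{i∈B} ‖Δ_i − Δ̄_B‖² ≤ 2ν̄ + ζ̄. Then ‖(1/|S|) · Σ_{i∈S} Δ_i − Δ̄_B‖² ≤ (1 + m/(n − 2m)) · ((2/ε + 1)·(2ν̄ + ζ̄) + 8c²). -/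
open Finset

lemma jensen_norm_sq {n d : ℕ} (S : Finset (Fin n)) (hS : S.Nonempty)
    (v : Fin n → EuclideanSpace ℝ (Fin d)) :
    ‖(S.card : ℝ)⁻¹ • ∑ i ∈ S, v i‖ ^ 2 ≤ (S.card : ℝ)⁻¹ * ∑ i ∈ S, ‖v i‖ ^ 2 := by
  have hs : (0:ℝ) < S.card := by exact_mod_cast card_pos.mpr hS
  have h1 : ‖∑ i ∈ S, v i‖ ^ 2 ≤ (S.card : ℝ) * ∑ i ∈ S, ‖v i‖ ^ 2 := by
    calc ‖∑ i ∈ S, v i‖ ^ 2 ≤ (∑ i ∈ S, ‖v i‖) ^ 2 := by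
          apply pow_le_pow_left₀ (norm_nonneg _) (norm_sum_le S v)
      _ ≤ (S.card : ℝ) * ∑ i ∈ S, ‖v i‖ ^ 2 :=
          sq_sum_le_card_mul_sum_sq (s := S) (f := fun i => ‖v i‖)
  rw [norm_smul, mul_pow]
  have h2 : ‖(S.card : ℝ)⁻¹‖ ^ 2 = (S.card:ℝ)⁻¹ * (S.card:ℝ)⁻¹ := by
    rw [Real.norm_eq_abs, abs_of_pos (by positivity)]; ring
  rw [h2, mul_assoc]
  calc (S.card:ℝ)⁻¹ * ((S.card:ℝ)⁻¹ * ‖∑ i ∈ S, v i‖ ^ 2)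
      ≤ (S.card:ℝ)⁻¹ * ((S.card:ℝ)⁻¹ * ((S.card : ℝ) * ∑ i ∈ S, ‖v i‖ ^ 2)) := by
        gcongr
    _ = (S.card : ℝ)⁻¹ * ∑ i ∈ S, ‖v i‖ ^ 2 := by field_simp

set_option maxHeartbeats 1000000 in
/-- Lemma 1 (κ-robustness of AlignIns, deterministic core). -/
theorem alignins_kappa_robust
    (ε : ℝ) (hε : 0 < ε)
    (n m d : ℕ) (hn : 1 < n) (hm : (m : ℝ) < (n : ℝ) / (3 + ε)) (hd : 1 ≤ d)
    (Δ : Fin n → EuclideanSpace ℝ (Fin d))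
    (B S : Finset (Fin n))
    (hB : B.card = n - m)
    (hSne : S.Nonempty) (hScard : n - 2 * m ≤ S.card)
    (c : ℝ) (hc : 0 ≤ c) (hbound : ∀ i ∈ S, ‖Δ i‖ ≤ c)
    (ν ζ : ℝ) (hν : 0 ≤ ν) (hζ : 0 ≤ ζ)
    (hdiv : (B.card : ℝ)⁻¹ * ∑ i ∈ B, ‖Δ i - (B.card : ℝ)⁻¹ • ∑ j ∈ B, Δ j‖ ^ 2
      ≤ 2 * ν + ζ) :
    ‖(S.card : ℝ)⁻¹ • ∑ i ∈ S, Δ i - (B.card : ℝ)⁻¹ • ∑ j ∈ B, Δ j‖ ^ 2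
      ≤ (1 + (m : ℝ) / ((n : ℝ) - 2 * m)) * ((2 / ε + 1) * (2 * ν + ζ) + 8 * c ^ 2) := by
  set μ := (B.card : ℝ)⁻¹ • ∑ j ∈ B, Δ j with hμdef
  set K := 2 * ν + ζ with hKdef
  have hK : 0 ≤ K := by positivity
  have h3ε : (0:ℝ) < 3 + ε := by linarith
  have hMN : (m:ℝ) * (3 + ε) < n := by rwa [lt_div_iff₀ h3ε] at hm
  have hM0 : (0:ℝ) ≤ m := Nat.cast_nonneg m
  have h3 : (0:ℝ) < (n:ℝ) - 3 * m := by nlinarith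
  have hεM : ε * m ≤ (n:ℝ) - 3 * m := by nlinarith
  have h2 : (0:ℝ) < (n:ℝ) - 2 * m := by linarith
  have hmnR : (m:ℝ) < n := by nlinarith
  have hmn : m ≤ n := by exact_mod_cast hmnR.le
  have h2mn : 2 * m ≤ n := by
    have : (2 * m : ℝ) ≤ n := by push_cast; linarith
    exact_mod_cast this
  have hBcard : (B.card : ℝ) = (n:ℝ) - m := by
    rw [hB]; push_cast [Nat.cast_sub hmn]; ring
  have hBpos : (0:ℝ) < B.card := by rw [hBcard]; linarith
  have hScast : (n:ℝ) - 2 * m ≤ S.card := by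
    have h := (Nat.cast_le (α := ℝ)).mpr hScard
    rw [Nat.cast_sub h2mn] at h; push_cast at h ⊢; linarith
  have hSpos : (0:ℝ) < S.card := lt_of_lt_of_le h2 hScast
  have hT : (n:ℝ) - 3 * m ≤ ((S ∩ B).card : ℝ) := by
    have hu : ((S ∪ B).card : ℕ) ≤ n := by simpa using card_le_univ (S ∪ B)
    have he : (S ∪ B).card + (S ∩ B).card = S.card + B.card :=
      card_union_add_card_inter S B
    have hcast : (S.card : ℝ) + B.card ≤ (n:ℝ) + (S ∩ B).card := by
      have := he ▸ (Nat.add_le_add_right hu (S ∩ B).card)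
      exact_mod_cast this
    rw [hBcard] at hcast; linarith
  have hTpos : (0:ℝ) < ((S ∩ B).card : ℝ) := lt_of_lt_of_le h3 hT
  have hSB : ((S \ B).card : ℝ) ≤ m := by
    have hsub : S \ B ⊆ Bᶜ := fun i hi => mem_compl.mpr (mem_sdiff.mp hi).2
    have h := card_le_card hsub
    have hcB : Bᶜ.card = m := by
      rw [card_compl, hB, Fintype.card_fin]; omega
    rw [hcB] at h; exact_mod_cast h
  set V := ∑ i ∈ B, ‖Δ i - μ‖ ^ 2 with hVdef
  have hV0 : 0 ≤ V := Finset.sum_nonneg fun i _ => by positivity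
  have hVle : V ≤ ((n:ℝ) - m) * K := by
    have h := mul_le_mul_of_nonneg_left hdiv hBpos.le
    rw [← mul_assoc, mul_inv_cancel₀ hBpos.ne', one_mul] at h
    rw [hBcard] at h; exact h
  have hVT : ∑ j ∈ S ∩ B, ‖Δ j - μ‖ ^ 2 ≤ V :=
    Finset.sum_le_sum_of_subset_of_nonneg inter_subset_right
      (fun i _ _ => by positivity)
  have hbad : ∀ i ∈ S \ B, ‖Δ i - μ‖ ^ 2 ≤ 8 * c ^ 2 + 2 * ((S ∩ B).card : ℝ)⁻¹ * V := by
    intro i hi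
    have hiS : i ∈ S := (mem_sdiff.mp hi).1
    have key2 : ((S ∩ B).card : ℝ) * ‖Δ i - μ‖ ^ 2
        ≤ ((S ∩ B).card : ℝ) * (8 * c ^ 2) + 2 * V := by
      calc ((S ∩ B).card : ℝ) * ‖Δ i - μ‖ ^ 2
          = ∑ _j ∈ S ∩ B, ‖Δ i - μ‖ ^ 2 := by rw [Finset.sum_const, nsmul_eq_mul]
        _ ≤ ∑ j ∈ S ∩ B, (8 * c ^ 2 + 2 * ‖Δ j - μ‖ ^ 2) := by
            apply Finset.sum_le_sum
            intro j hj
            have hjS : j ∈ S := (mem_inter.mp hj).1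
            have ht : ‖Δ i - μ‖ ≤ ‖Δ i - Δ j‖ + ‖Δ j - μ‖ := by
              calc ‖Δ i - μ‖ = ‖(Δ i - Δ j) + (Δ j - μ)‖ := by rw [sub_add_sub_cancel]
                _ ≤ ‖Δ i - Δ j‖ + ‖Δ j - μ‖ := norm_add_le _ _
            have h2c : ‖Δ i - Δ j‖ ≤ 2 * c := by
              have h0 := norm_sub_le (Δ i) (Δ j)
              have h1 := hbound i hiS
              have h2 := hbound j hjS
              linarith
            have hx : ‖Δ i - μ‖ ^ 2 ≤ (‖Δ i - Δ j‖ + ‖Δ j - μ‖) ^ 2 :=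
              pow_le_pow_left₀ (norm_nonneg _) ht 2
            nlinarith [hx, sq_nonneg (‖Δ i - Δ j‖ - ‖Δ j - μ‖),
              mul_le_mul h2c h2c (norm_nonneg _) (by positivity : (0:ℝ) ≤ 2 * c),
              norm_nonneg (Δ i - Δ j)]
        _ = ((S ∩ B).card : ℝ) * (8 * c ^ 2) + 2 * ∑ j ∈ S ∩ B, ‖Δ j - μ‖ ^ 2 := by
            rw [Finset.sum_add_distrib, Finset.sum_const, nsmul_eq_mul, ← Finset.mul_sum]
        _ ≤ ((S ∩ B).card : ℝ) * (8 * c ^ 2) + 2 * V := by linarith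
    calc ‖Δ i - μ‖ ^ 2
        = ((S ∩ B).card : ℝ)⁻¹ * (((S ∩ B).card : ℝ) * ‖Δ i - μ‖ ^ 2) := by
          rw [← mul_assoc, inv_mul_cancel₀ hTpos.ne', one_mul]
      _ ≤ ((S ∩ B).card : ℝ)⁻¹ * (((S ∩ B).card : ℝ) * (8 * c ^ 2) + 2 * V) := by
          exact mul_le_mul_of_nonneg_left key2 (by positivity)
      _ = 8 * c ^ 2 + 2 * ((S ∩ B).card : ℝ)⁻¹ * V := by
          field_simp
  have hrw : (S.card : ℝ)⁻¹ • ∑ i ∈ S, Δ i - μ = (S.card : ℝ)⁻¹ • ∑ i ∈ S, (Δ i - μ) := by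
    rw [Finset.sum_sub_distrib, smul_sub, Finset.sum_const, ← Nat.cast_smul_eq_nsmul ℝ,
      smul_smul, inv_mul_cancel₀ hSpos.ne', one_smul]
  rw [hrw]
  have hsplit : ∑ i ∈ S, ‖Δ i - μ‖ ^ 2
      = ∑ i ∈ S ∩ B, ‖Δ i - μ‖ ^ 2 + ∑ i ∈ S \ B, ‖Δ i - μ‖ ^ 2 :=
    (Finset.sum_inter_add_sum_sdiff S B _).symm
  have hbadsum : ∑ i ∈ S \ B, ‖Δ i - μ‖ ^ 2
      ≤ (m:ℝ) * (8 * c ^ 2 + 2 * ((S ∩ B).card : ℝ)⁻¹ * V) := by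
    calc ∑ i ∈ S \ B, ‖Δ i - μ‖ ^ 2
        ≤ ∑ _i ∈ S \ B, (8 * c ^ 2 + 2 * ((S ∩ B).card : ℝ)⁻¹ * V) :=
          Finset.sum_le_sum hbad
      _ = ((S \ B).card : ℝ) * (8 * c ^ 2 + 2 * ((S ∩ B).card : ℝ)⁻¹ * V) := by
          rw [Finset.sum_const, nsmul_eq_mul]
      _ ≤ (m:ℝ) * (8 * c ^ 2 + 2 * ((S ∩ B).card : ℝ)⁻¹ * V) := by
          apply mul_le_mul_of_nonneg_right hSB
          positivity
  have hmain : ‖(S.card : ℝ)⁻¹ • ∑ i ∈ S, (Δ i - μ)‖ ^ 2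
      ≤ (S.card : ℝ)⁻¹ * (V + (m:ℝ) * (8 * c ^ 2 + 2 * ((S ∩ B).card : ℝ)⁻¹ * V)) := by
    calc ‖(S.card : ℝ)⁻¹ • ∑ i ∈ S, (Δ i - μ)‖ ^ 2
        ≤ (S.card : ℝ)⁻¹ * ∑ i ∈ S, ‖Δ i - μ‖ ^ 2 := jensen_norm_sq S hSne _
      _ ≤ (S.card : ℝ)⁻¹ * (V + (m:ℝ) * (8 * c ^ 2 + 2 * ((S ∩ B).card : ℝ)⁻¹ * V)) := by
          have hle : ∑ i ∈ S, ‖Δ i - μ‖ ^ 2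
              ≤ V + (m:ℝ) * (8 * c ^ 2 + 2 * ((S ∩ B).card : ℝ)⁻¹ * V) := by
            rw [hsplit]; linarith
          exact mul_le_mul_of_nonneg_left hle (by positivity)
  have hstep : (S.card : ℝ)⁻¹ * (V + (m:ℝ) * (8 * c ^ 2 + 2 * ((S ∩ B).card : ℝ)⁻¹ * V))
      ≤ ((n:ℝ) - 2 * m)⁻¹ * (((n:ℝ) - m) * K
          + (m:ℝ) * (8 * c ^ 2 + 2 * ((n:ℝ) - 3 * m)⁻¹ * (((n:ℝ) - m) * K))) := by
    gcongr
    all_goals first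
      | positivity
      | exact h3
      | exact hScast
      | exact hT
      | exact hVle
      | linarith
  have hinner : ((n:ℝ) - m) * K
        + (m:ℝ) * (8 * c ^ 2 + 2 * ((n:ℝ) - 3 * m)⁻¹ * (((n:ℝ) - m) * K))
      ≤ ((n:ℝ) - m) * ((2 / ε + 1) * K + 8 * c ^ 2) := by
    have h1 : (m:ℝ) ≤ (n:ℝ) - m := by linarith
    have h2' : (m:ℝ) * ((n:ℝ) - 3 * m)⁻¹ ≤ ε⁻¹ := by
      rw [← div_eq_mul_inv, ← one_div]
      exact (div_le_div_iff₀ h3 hε).mpr (by linarith)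
    have e1 : 2 * ((m:ℝ) * ((n:ℝ) - 3 * m)⁻¹) * (((n:ℝ) - m) * K)
        ≤ 2 * ε⁻¹ * (((n:ℝ) - m) * K) := by
      have hnn : (0:ℝ) ≤ ((n:ℝ) - m) * K := mul_nonneg (by linarith) hK
      exact mul_le_mul_of_nonneg_right
        (by linarith : 2 * ((m:ℝ) * ((n:ℝ) - 3 * m)⁻¹) ≤ 2 * ε⁻¹) hnn
    have e2 : 8 * (m:ℝ) * c ^ 2 ≤ 8 * ((n:ℝ) - m) * c ^ 2 := by nlinarith
    have hdivinv : 2 / ε = 2 * ε⁻¹ := by rw [div_eq_mul_inv]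
    rw [hdivinv]
    linarith [e1, e2]
  have hfac : 1 + (m : ℝ) / ((n : ℝ) - 2 * m) = ((n:ℝ) - m) * ((n:ℝ) - 2 * m)⁻¹ := by
    linear_combination -(mul_inv_cancel₀ h2.ne')
  have hfinal : ((n:ℝ) - 2 * m)⁻¹ * (((n:ℝ) - m) * K
          + (m:ℝ) * (8 * c ^ 2 + 2 * ((n:ℝ) - 3 * m)⁻¹ * (((n:ℝ) - m) * K)))
      ≤ (1 + (m : ℝ) / ((n : ℝ) - 2 * m)) * ((2 / ε + 1) * K + 8 * c ^ 2) := by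
    rw [hfac]
    calc ((n:ℝ) - 2 * m)⁻¹ * (((n:ℝ) - m) * K
          + (m:ℝ) * (8 * c ^ 2 + 2 * ((n:ℝ) - 3 * m)⁻¹ * (((n:ℝ) - m) * K)))
        ≤ ((n:ℝ) - 2 * m)⁻¹ * (((n:ℝ) - m) * ((2 / ε + 1) * K + 8 * c ^ 2)) :=
          mul_le_mul_of_nonneg_left hinner (inv_nonneg.2 h2.le)
      _ = ((n:ℝ) - m) * ((n:ℝ) - 2 * m)⁻¹ * ((2 / ε + 1) * K + 8 * c ^ 2) := by ring
  exact le_trans (le_trans hmain hstep) hfinal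
end

section
/- Local divergence lemma (probabilistic). Let (Ω, P) be a probability space, let B be a nonempty finite index set, let τ ≥ 1 be a natural number and η > 0 a real with η ≤ 1/(2τ). For each i ∈ B and each s ∈ {0,…,τ−1}, let g_i^s and h_i^s be square-integrable random vectors Ω → ℝ^d, and define Δ_i := η · Σ_{s=0}^{τ−1} g_i^s, Δ̄ := (1/|B|) · Σ_{i∈B} Δ_i, and h̄^s := (1/|B|) · Σ_{i∈B} h_i^s. Suppose there are reals ν̄, ζ̄ ≥ 0 such that for every s ∈ {0,…,τ−1}: (1/|B|) · Σ_{i∈B} E‖g_i^s − h_i^s‖² ≤ ν̄ and (1/|B|) · Σ_{i∈B} E‖h_i^s − h̄^s‖² ≤ ζ̄. Then (1/|B|) · Σ_{i∈B} E‖Δ_i − Δ̄‖² ≤ 2ν̄ + ζ̄. -/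
open Finset MeasureTheory

/-- Cauchy–Schwarz for sums: `‖∑ x_s‖² ≤ n · ∑ ‖x_s‖²`. -/
lemma sq_norm_sum_le_aux {E : Type*} [SeminormedAddCommGroup E] {n : ℕ} (x : Fin n → E) :
    ‖∑ s : Fin n, x s‖ ^ 2 ≤ (n : ℝ) * ∑ s : Fin n, ‖x s‖ ^ 2 := by
  have h1 : ‖∑ s : Fin n, x s‖ ≤ ∑ s : Fin n, ‖x s‖ := norm_sum_le _ _
  have h2 : (∑ s : Fin n, ‖x s‖) ^ 2 ≤ (Finset.univ.card : ℝ) * ∑ s : Fin n, ‖x s‖ ^ 2 :=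
    sq_sum_le_card_mul_sum_sq
  have h3 : ‖∑ s : Fin n, x s‖ ^ 2 ≤ (∑ s : Fin n, ‖x s‖) ^ 2 := by
    apply pow_le_pow_left₀ (norm_nonneg _) h1
  simpa [Finset.card_univ] using h3.trans h2

/-- The mean minimizes the sum of squared distances. -/
lemma var_min_aux {E : Type*} [NormedAddCommGroup E] [InnerProductSpace ℝ E]
    {ι : Type*} (B : Finset ι) (hB : B.Nonempty) (v : ι → E) (c : E) :
    ∑ i ∈ B, ‖v i - (B.card : ℝ)⁻¹ • ∑ j ∈ B, v j‖ ^ 2 ≤ ∑ i ∈ B, ‖v i - c‖ ^ 2 := by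
  have hn : (B.card : ℝ) ≠ 0 := by
    exact Nat.cast_ne_zero.mpr (Finset.card_pos.mpr hB).ne'
  set m : E := (B.card : ℝ)⁻¹ • ∑ j ∈ B, v j with hm
  have key : ∑ i ∈ B, (v i - m) = 0 := by
    rw [Finset.sum_sub_distrib, Finset.sum_const, hm, ← Nat.cast_smul_eq_nsmul ℝ,
      smul_smul, mul_inv_cancel₀ hn, one_smul, sub_self]
  have expand : ∀ i, ‖v i - c‖ ^ 2
      = ‖v i - m‖ ^ 2 + 2 * (inner ℝ (v i - m) (m - c) : ℝ) + ‖m - c‖ ^ 2 := by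
    intro i
    have : v i - c = (v i - m) + (m - c) := by abel
    rw [this, norm_add_sq_real]
  calc ∑ i ∈ B, ‖v i - m‖ ^ 2
      ≤ ∑ i ∈ B, ‖v i - m‖ ^ 2 + (B.card : ℝ) * ‖m - c‖ ^ 2 := by
        have hc0 : (0:ℝ) < B.card := by exact_mod_cast Finset.card_pos.mpr hB
        nlinarith [sq_nonneg ‖m - c‖]
    _ = ∑ i ∈ B, ‖v i - c‖ ^ 2 := by
        simp only [expand]
        rw [Finset.sum_add_distrib, Finset.sum_add_distrib]
        have : ∑ i ∈ B, 2 * (inner ℝ (v i - m) (m - c) : ℝ) = 2 * (inner ℝ (∑ i ∈ B, (v i - m)) (m - c) : ℝ) := by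
          rw [← Finset.mul_sum, sum_inner]
        rw [this, key]
        simp [Finset.sum_const, nsmul_eq_mul]

lemma local_div_arith1 (τ : ℕ) (hτ : 1 ≤ τ) (η : ℝ) (hη : 0 < η)
    (hη' : η ≤ 1 / (2 * τ)) : η ^ 2 * τ ^ 2 ≤ 1 / 4 := by
  have hτpos : (0 : ℝ) < τ := by exact_mod_cast hτ
  have h2 : (0 : ℝ) < 2 * τ := by positivity
  rw [le_div_iff₀ h2] at hη'
  nlinarith [mul_pos hη hτpos]

lemma local_div_arith2 (n ν ζ q : ℝ) (hn : 0 < n) (hν : 0 ≤ ν) (hζ : 0 ≤ ζ)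
    (hq' : q ≤ 1 / 4) : n⁻¹ * (q * (2 * n * ν + 2 * n * ζ)) ≤ 2 * ν + ζ := by
  have : n⁻¹ * (q * (2 * n * ν + 2 * n * ζ)) = q * (2 * ν + 2 * ζ) := by
    field_simp
  rw [this]
  nlinarith

/-- Local divergence lemma (probabilistic): under bounded average stochastic-gradient
variance `ν̄` and bounded average heterogeneity `ζ̄`, and a local learning rate
`η ≤ 1/(2τ)`, the average expected squared deviation of the local updates
`Δ_i = η·Σ_s g_i^s` from their mean is at most `2ν̄ + ζ̄`. -/
theorem local_divergence_probabilistic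
    {Ω : Type*} [MeasurableSpace Ω] (P : Measure Ω) [IsProbabilityMeasure P]
    {ι : Type*} [DecidableEq ι] (B : Finset ι) (hBne : B.Nonempty)
    (d τ : ℕ) (hτ : 1 ≤ τ) (η : ℝ) (hη : 0 < η) (hη' : η ≤ 1 / (2 * τ))
    (g h : ι → Fin τ → Ω → EuclideanSpace ℝ (Fin d))
    (hg : ∀ i ∈ B, ∀ s, MemLp (g i s) 2 P)
    (hh : ∀ i ∈ B, ∀ s, MemLp (h i s) 2 P)
    (ν ζ : ℝ) (hν : 0 ≤ ν) (hζ : 0 ≤ ζ)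
    (hvar : ∀ s : Fin τ,
      (B.card : ℝ)⁻¹ * ∑ i ∈ B, ∫ ω, ‖g i s ω - h i s ω‖ ^ 2 ∂P ≤ ν)
    (hhet : ∀ s : Fin τ,
      (B.card : ℝ)⁻¹ * ∑ i ∈ B,
        ∫ ω, ‖h i s ω - (B.card : ℝ)⁻¹ • ∑ j ∈ B, h j s ω‖ ^ 2 ∂P ≤ ζ) :
    (B.card : ℝ)⁻¹ * ∑ i ∈ B,
      ∫ ω, ‖(η • ∑ s : Fin τ, g i s ω)
        - (B.card : ℝ)⁻¹ • ∑ j ∈ B, (η • ∑ s : Fin τ, g j s ω)‖ ^ 2 ∂P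
      ≤ 2 * ν + ζ := by
  have hcard : (0 : ℝ) < B.card := by exact_mod_cast Finset.card_pos.mpr hBne
  -- Memℒp facts
  have hΔ : ∀ i ∈ B, MemLp (fun ω => η • ∑ s : Fin τ, g i s ω) 2 P := by
    intro i hi
    have := memLp_finset_sum (Finset.univ : Finset (Fin τ)) (fun s _ => hg i hi s)
    exact this.const_smul η
  have hΔbar : MemLp (fun ω => (B.card : ℝ)⁻¹ • ∑ j ∈ B, (η • ∑ s : Fin τ, g j s ω)) 2 P := by
    have := memLp_finset_sum B (fun j hj => hΔ j hj)
    exact this.const_smul ((B.card : ℝ)⁻¹)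
  have hbar : ∀ s : Fin τ, MemLp (fun ω => (B.card : ℝ)⁻¹ • ∑ j ∈ B, h j s ω) 2 P := by
    intro s
    have := memLp_finset_sum B (fun j hj => hh j hj s)
    exact this.const_smul ((B.card : ℝ)⁻¹)
  -- integrability of all squared norms
  have intΔ : ∀ i ∈ B, Integrable (fun ω =>
      ‖(η • ∑ s : Fin τ, g i s ω)
        - (B.card : ℝ)⁻¹ • ∑ j ∈ B, (η • ∑ s : Fin τ, g j s ω)‖ ^ 2) P := by
    intro i hi
    have hm := (hΔ i hi).sub hΔbar
    exact (memLp_two_iff_integrable_sq_norm hm.aestronglyMeasurable).mp hm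
  have intgh : ∀ i ∈ B, ∀ s, Integrable (fun ω => ‖g i s ω - h i s ω‖ ^ 2) P := by
    intro i hi s
    have hm := (hg i hi s).sub (hh i hi s)
    exact (memLp_two_iff_integrable_sq_norm hm.aestronglyMeasurable).mp hm
  have inthb : ∀ i ∈ B, ∀ s, Integrable (fun ω =>
      ‖h i s ω - (B.card : ℝ)⁻¹ • ∑ j ∈ B, h j s ω‖ ^ 2) P := by
    intro i hi s
    have hm := (hh i hi s).sub (hbar s)
    exact (memLp_two_iff_integrable_sq_norm hm.aestronglyMeasurable).mp hm
  -- the dominating function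
  set G : Ω → ℝ := fun ω => η ^ 2 * τ * ∑ s : Fin τ, ∑ i ∈ B,
      (2 * ‖g i s ω - h i s ω‖ ^ 2
        + 2 * ‖h i s ω - (B.card : ℝ)⁻¹ • ∑ j ∈ B, h j s ω‖ ^ 2) with hG
  have intG : Integrable G P := by
    apply Integrable.const_mul
    apply integrable_finset_sum
    intro s _
    apply integrable_finset_sum
    intro i hi
    exact ((intgh i hi s).const_mul 2).add ((inthb i hi s).const_mul 2)
  -- pointwise bound
  have hpt : ∀ ω, (∑ i ∈ B, ‖(η • ∑ s : Fin τ, g i s ω)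
      - (B.card : ℝ)⁻¹ • ∑ j ∈ B, (η • ∑ s : Fin τ, g j s ω)‖ ^ 2) ≤ G ω := by
    intro ω
    set c : EuclideanSpace ℝ (Fin d) :=
      η • ∑ s : Fin τ, (B.card : ℝ)⁻¹ • ∑ j ∈ B, h j s ω with hc
    have step1 := var_min_aux B hBne (fun i => η • ∑ s : Fin τ, g i s ω) c
    refine step1.trans ?_
    have step2 : ∀ i ∈ B, ‖(η • ∑ s : Fin τ, g i s ω) - c‖ ^ 2
        ≤ η ^ 2 * τ * ∑ s : Fin τ,
          (2 * ‖g i s ω - h i s ω‖ ^ 2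
            + 2 * ‖h i s ω - (B.card : ℝ)⁻¹ • ∑ j ∈ B, h j s ω‖ ^ 2) := by
      intro i hi
      have hrw : (η • ∑ s : Fin τ, g i s ω) - c
          = η • ∑ s : Fin τ, (g i s ω - (B.card : ℝ)⁻¹ • ∑ j ∈ B, h j s ω) := by
        rw [hc, ← smul_sub, ← Finset.sum_sub_distrib]
      rw [hrw, norm_smul]
      have hcs := sq_norm_sum_le_aux
        (fun s : Fin τ => g i s ω - (B.card : ℝ)⁻¹ • ∑ j ∈ B, h j s ω)
      have hterm : ∀ s : Fin τ,
          ‖g i s ω - (B.card : ℝ)⁻¹ • ∑ j ∈ B, h j s ω‖ ^ 2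
            ≤ 2 * ‖g i s ω - h i s ω‖ ^ 2
              + 2 * ‖h i s ω - (B.card : ℝ)⁻¹ • ∑ j ∈ B, h j s ω‖ ^ 2 := by
        intro s
        have htri : ‖g i s ω - (B.card : ℝ)⁻¹ • ∑ j ∈ B, h j s ω‖
            ≤ ‖g i s ω - h i s ω‖ + ‖h i s ω - (B.card : ℝ)⁻¹ • ∑ j ∈ B, h j s ω‖ := by
          have : g i s ω - (B.card : ℝ)⁻¹ • ∑ j ∈ B, h j s ω
              = (g i s ω - h i s ω) + (h i s ω - (B.card : ℝ)⁻¹ • ∑ j ∈ B, h j s ω) := by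
            abel
          rw [this]; exact norm_add_le _ _
        nlinarith [norm_nonneg (g i s ω - (B.card : ℝ)⁻¹ • ∑ j ∈ B, h j s ω),
          norm_nonneg (g i s ω - h i s ω),
          norm_nonneg (h i s ω - (B.card : ℝ)⁻¹ • ∑ j ∈ B, h j s ω),
          sq_nonneg (‖g i s ω - h i s ω‖ - ‖h i s ω - (B.card : ℝ)⁻¹ • ∑ j ∈ B, h j s ω‖)]
      have hsum := Finset.sum_le_sum (fun s (_ : s ∈ Finset.univ) => hterm s)
      calc (|η| * ‖∑ s : Fin τ, (g i s ω - (B.card : ℝ)⁻¹ • ∑ j ∈ B, h j s ω)‖) ^ 2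
          = η ^ 2 * ‖∑ s : Fin τ, (g i s ω - (B.card : ℝ)⁻¹ • ∑ j ∈ B, h j s ω)‖ ^ 2 := by
            rw [mul_pow, sq_abs]
        _ ≤ η ^ 2 * ((τ : ℝ) * ∑ s : Fin τ,
              ‖g i s ω - (B.card : ℝ)⁻¹ • ∑ j ∈ B, h j s ω‖ ^ 2) := by
            exact mul_le_mul_of_nonneg_left hcs (sq_nonneg η)
        _ ≤ η ^ 2 * ((τ : ℝ) * ∑ s : Fin τ,
              (2 * ‖g i s ω - h i s ω‖ ^ 2
                + 2 * ‖h i s ω - (B.card : ℝ)⁻¹ • ∑ j ∈ B, h j s ω‖ ^ 2)) := by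
            apply mul_le_mul_of_nonneg_left _ (sq_nonneg η)
            exact mul_le_mul_of_nonneg_left hsum (by positivity)
        _ = η ^ 2 * τ * ∑ s : Fin τ,
              (2 * ‖g i s ω - h i s ω‖ ^ 2
                + 2 * ‖h i s ω - (B.card : ℝ)⁻¹ • ∑ j ∈ B, h j s ω‖ ^ 2) := by ring
    calc ∑ i ∈ B, ‖(η • ∑ s : Fin τ, g i s ω) - c‖ ^ 2
        ≤ ∑ i ∈ B, η ^ 2 * τ * ∑ s : Fin τ,
            (2 * ‖g i s ω - h i s ω‖ ^ 2
              + 2 * ‖h i s ω - (B.card : ℝ)⁻¹ • ∑ j ∈ B, h j s ω‖ ^ 2) :=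
          Finset.sum_le_sum step2
      _ = G ω := by
          rw [hG, ← Finset.mul_sum, Finset.sum_comm]
  -- integrate
  have hsum_int : ∑ i ∈ B, (∫ ω, ‖(η • ∑ s : Fin τ, g i s ω)
      - (B.card : ℝ)⁻¹ • ∑ j ∈ B, (η • ∑ s : Fin τ, g j s ω)‖ ^ 2 ∂P)
      = ∫ ω, ∑ i ∈ B, ‖(η • ∑ s : Fin τ, g i s ω)
      - (B.card : ℝ)⁻¹ • ∑ j ∈ B, (η • ∑ s : Fin τ, g j s ω)‖ ^ 2 ∂P :=
    (integral_finset_sum B intΔ).symm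
  have hintle : ∫ ω, (∑ i ∈ B, ‖(η • ∑ s : Fin τ, g i s ω)
      - (B.card : ℝ)⁻¹ • ∑ j ∈ B, (η • ∑ s : Fin τ, g j s ω)‖ ^ 2) ∂P ≤ ∫ ω, G ω ∂P :=
    integral_mono (integrable_finset_sum B intΔ) intG hpt
  -- evaluate ∫ G
  have intF : ∀ s : Fin τ, ∀ i ∈ B, Integrable (fun ω =>
      2 * ‖g i s ω - h i s ω‖ ^ 2
        + 2 * ‖h i s ω - (B.card : ℝ)⁻¹ • ∑ j ∈ B, h j s ω‖ ^ 2) P := by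
    intro s i hi
    exact ((intgh i hi s).const_mul 2).add ((inthb i hi s).const_mul 2)
  have intFs : ∀ s : Fin τ, Integrable (fun ω => ∑ i ∈ B,
      (2 * ‖g i s ω - h i s ω‖ ^ 2
        + 2 * ‖h i s ω - (B.card : ℝ)⁻¹ • ∑ j ∈ B, h j s ω‖ ^ 2)) P :=
    fun s => integrable_finset_sum B (intF s)
  have hGval : ∫ ω, G ω ∂P = η ^ 2 * τ * ∑ s : Fin τ,
      ((∑ i ∈ B, 2 * ∫ ω, ‖g i s ω - h i s ω‖ ^ 2 ∂P)
        + ∑ i ∈ B, 2 * ∫ ω, ‖h i s ω - (B.card : ℝ)⁻¹ • ∑ j ∈ B, h j s ω‖ ^ 2 ∂P) := by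
    rw [hG]
    simp only
    rw [integral_const_mul]
    congr 1
    rw [integral_finset_sum Finset.univ (fun s _ => intFs s)]
    apply Finset.sum_congr rfl
    intro s _
    rw [integral_finset_sum B (intF s), ← Finset.sum_add_distrib]
    apply Finset.sum_congr rfl
    intro i hi
    rw [integral_add ((intgh i hi s).const_mul 2) ((inthb i hi s).const_mul 2),
      integral_const_mul, integral_const_mul]
  have hGbound : ∫ ω, G ω ∂P ≤ η ^ 2 * τ * (τ * (2 * B.card * ν + 2 * B.card * ζ)) := by
    rw [hGval]
    apply mul_le_mul_of_nonneg_left _ (by positivity)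
    calc ∑ s : Fin τ, ((∑ i ∈ B, 2 * ∫ ω, ‖g i s ω - h i s ω‖ ^ 2 ∂P)
          + ∑ i ∈ B, 2 * ∫ ω, ‖h i s ω - (B.card : ℝ)⁻¹ • ∑ j ∈ B, h j s ω‖ ^ 2 ∂P)
        ≤ ∑ s : Fin τ, (2 * B.card * ν + 2 * B.card * ζ) := by
          apply Finset.sum_le_sum
          intro s _
          have hv := hvar s
          have hz := hhet s
          rw [inv_mul_le_iff₀ hcard] at hv hz
          have e1 : ∑ i ∈ B, 2 * ∫ ω, ‖g i s ω - h i s ω‖ ^ 2 ∂P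
              = 2 * ∑ i ∈ B, ∫ ω, ‖g i s ω - h i s ω‖ ^ 2 ∂P := by
            rw [Finset.mul_sum]
          have e2 : ∑ i ∈ B, 2 * ∫ ω, ‖h i s ω - (B.card : ℝ)⁻¹ • ∑ j ∈ B, h j s ω‖ ^ 2 ∂P
              = 2 * ∑ i ∈ B, ∫ ω, ‖h i s ω - (B.card : ℝ)⁻¹ • ∑ j ∈ B, h j s ω‖ ^ 2 ∂P := by
            rw [Finset.mul_sum]
          rw [e1, e2]
          linarith
      _ = (τ : ℝ) * (2 * B.card * ν + 2 * B.card * ζ) := by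
          rw [Finset.sum_const, Finset.card_univ, Fintype.card_fin, nsmul_eq_mul]
  -- final arithmetic
  have hfinal : (B.card : ℝ)⁻¹ * ∫ ω, G ω ∂P ≤ 2 * ν + ζ := by
    have hb := mul_le_mul_of_nonneg_left hGbound (le_of_lt (inv_pos.mpr hcard))
    refine hb.trans ?_
    have e : (B.card : ℝ)⁻¹ * (η ^ 2 * τ * (τ * (2 * B.card * ν + 2 * B.card * ζ)))
        = (B.card : ℝ)⁻¹ * ((η ^ 2 * τ ^ 2) * (2 * B.card * ν + 2 * B.card * ζ)) := by
      ring
    rw [e]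
    exact local_div_arith2 _ _ _ _ hcard hν hζ (local_div_arith1 τ hτ η hη hη')
  calc (B.card : ℝ)⁻¹ * ∑ i ∈ B,
      ∫ ω, ‖(η • ∑ s : Fin τ, g i s ω)
        - (B.card : ℝ)⁻¹ • ∑ j ∈ B, (η • ∑ s : Fin τ, g j s ω)‖ ^ 2 ∂P
      ≤ (B.card : ℝ)⁻¹ * ∫ ω, G ω ∂P := by
        rw [hsum_int]
        exact mul_le_mul_of_nonneg_left hintle (le_of_lt (inv_pos.mpr hcard))
    _ ≤ 2 * ν + ζ := hfinal
end

section
/- Local divergence bound, deterministic sharpened form. Let τ ≥ 1 be a natural number, η > 0 a real with η ≤ 1/(2τ), and d, n ≥ 1. For each i ∈ {1,…,n} and each s ∈ {0,…,τ−1}, let g_i^s, h_i^s ∈ ℝ^d, and define Δ_i := η · Σ_{s=0}^{τ−1} g_i^s, Δ̄ := (1/n) · Σ_{i=1}^n Δ_i, and h̄^s := (1/n) · Σ_{i=1}^n h_i^s. Suppose there are reals ν̄, ζ̄ ≥ 0 such that for every s: (1/n) · Σ_{i=1}^n ‖g_i^s − h_i^s‖² ≤ ν̄ and (1/n) · Σ_{i=1}^n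 ‖h_i^s − h̄^s‖² ≤ ζ̄. Then (1/n) · Σ_{i=1}^n ‖Δ_i − Δ̄‖² ≤ 3 τ² η² (2ν̄ + ζ̄). -/
open Finset

section aux
variable {E : Type*} [NormedAddCommGroup E] [InnerProductSpace ℝ E]

lemma norm_sum_sq_le_card {k : ℕ} (f : Fin k → E) :
    ‖∑ s : Fin k, f s‖ ^ 2 ≤ (k : ℝ) * ∑ s : Fin k, ‖f s‖ ^ 2 := by
  calc ‖∑ s : Fin k, f s‖ ^ 2 ≤ (∑ s : Fin k, ‖f s‖) ^ 2 := by
        have := norm_sum_le Finset.univ f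
        exact pow_le_pow_left₀ (norm_nonneg _) this 2
    _ ≤ (k : ℝ) * ∑ s : Fin k, ‖f s‖ ^ 2 := by
        have := sq_sum_le_card_mul_sum_sq (s := (Finset.univ : Finset (Fin k)))
          (f := fun s => ‖f s‖)
        simpa using this

lemma norm_avg_sq_le {k : ℕ} (hk : 1 ≤ k) (f : Fin k → E) :
    ‖(k : ℝ)⁻¹ • ∑ s : Fin k, f s‖ ^ 2 ≤ (k : ℝ)⁻¹ * ∑ s : Fin k, ‖f s‖ ^ 2 := by
  have hk0 : (0 : ℝ) < k := by exact_mod_cast hk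
  rw [norm_smul]
  have h1 := norm_sum_sq_le_card f
  have : ‖(k : ℝ)⁻¹‖ = (k : ℝ)⁻¹ := by
    rw [Real.norm_eq_abs, abs_of_pos (by positivity)]
  rw [this, mul_pow]
  calc (k : ℝ)⁻¹ ^ 2 * ‖∑ s : Fin k, f s‖ ^ 2
      ≤ (k : ℝ)⁻¹ ^ 2 * ((k : ℝ) * ∑ s : Fin k, ‖f s‖ ^ 2) := by
        exact mul_le_mul_of_nonneg_left h1 (by positivity)
    _ = (k : ℝ)⁻¹ * ∑ s : Fin k, ‖f s‖ ^ 2 := by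
        field_simp

lemma norm_add3_sq_le (a b c : E) :
    ‖a + b + c‖ ^ 2 ≤ 3 * (‖a‖ ^ 2 + ‖b‖ ^ 2 + ‖c‖ ^ 2) := by
  have h1 : ‖a + b + c‖ ≤ ‖a‖ + ‖b‖ + ‖c‖ := norm_add₃_le
  have h2 : ‖a + b + c‖ ^ 2 ≤ (‖a‖ + ‖b‖ + ‖c‖) ^ 2 :=
    pow_le_pow_left₀ (norm_nonneg _) h1 2
  nlinarith [sq_nonneg (‖a‖ - ‖b‖), sq_nonneg (‖a‖ - ‖c‖), sq_nonneg (‖b‖ - ‖c‖)]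

end aux

/-- Local divergence bound, deterministic sharpened form:
`(1/n) Σ_i ‖Δ_i − Δ̄‖² ≤ 3τ²η²(2ν̄ + ζ̄)` where `Δ_i = η·Σ_s g_i^s`. -/
theorem local_divergence_deterministic
    (d n τ : ℕ) (hd : 1 ≤ d) (hn : 1 ≤ n) (hτ : 1 ≤ τ)
    (η : ℝ) (hη : 0 < η) (hη' : η ≤ 1 / (2 * τ))
    (g h : Fin n → Fin τ → EuclideanSpace ℝ (Fin d))
    (ν ζ : ℝ) (hν : 0 ≤ ν) (hζ : 0 ≤ ζ)
    (hvar : ∀ s : Fin τ,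
      (n : ℝ)⁻¹ * ∑ i : Fin n, ‖g i s - h i s‖ ^ 2 ≤ ν)
    (hhet : ∀ s : Fin τ,
      (n : ℝ)⁻¹ * ∑ i : Fin n, ‖h i s - (n : ℝ)⁻¹ • ∑ j : Fin n, h j s‖ ^ 2 ≤ ζ) :
    (n : ℝ)⁻¹ * ∑ i : Fin n,
      ‖(η • ∑ s : Fin τ, g i s) - (n : ℝ)⁻¹ • ∑ j : Fin n, (η • ∑ s : Fin τ, g j s)‖ ^ 2
      ≤ 3 * (τ : ℝ) ^ 2 * η ^ 2 * (2 * ν + ζ) := by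
  have hn0 : (0 : ℝ) < n := by exact_mod_cast hn
  set gbar : Fin τ → EuclideanSpace ℝ (Fin d) := fun s => (n : ℝ)⁻¹ • ∑ j : Fin n, g j s with hgbar
  set hbar : Fin τ → EuclideanSpace ℝ (Fin d) := fun s => (n : ℝ)⁻¹ • ∑ j : Fin n, h j s with hhbar
  -- rewrite the difference
  have key : ∀ i : Fin n,
      (η • ∑ s : Fin τ, g i s) - (n : ℝ)⁻¹ • ∑ j : Fin n, (η • ∑ s : Fin τ, g j s)
      = η • ∑ s : Fin τ, (g i s - gbar s) := by
    intro i
    simp only [hgbar, Finset.smul_sum, Finset.sum_sub_distrib, smul_sub]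
    rw [Finset.sum_comm]
    congr 1
    exact Finset.sum_congr rfl fun s _ => Finset.sum_congr rfl fun j _ => smul_comm _ _ _
  -- per-(i,s) three-term bound
  have step1 : ∀ s : Fin τ, (n : ℝ)⁻¹ * ∑ i : Fin n, ‖g i s - gbar s‖ ^ 2 ≤ 3 * (2 * ν + ζ) := by
    intro s
    have hthird : ‖hbar s - gbar s‖ ^ 2 ≤ ν := by
      have heq : hbar s - gbar s = (n : ℝ)⁻¹ • ∑ j : Fin n, (h j s - g j s) := by
        simp only [hhbar, hgbar, Finset.sum_sub_distrib, smul_sub]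
      rw [heq]
      calc ‖(n : ℝ)⁻¹ • ∑ j : Fin n, (h j s - g j s)‖ ^ 2
          ≤ (n : ℝ)⁻¹ * ∑ j : Fin n, ‖h j s - g j s‖ ^ 2 := norm_avg_sq_le hn _
        _ ≤ ν := by
            have := hvar s
            simp only [norm_sub_rev (h _ s)]
            simpa [norm_sub_rev] using this
    have hpt : ∀ i : Fin n, ‖g i s - gbar s‖ ^ 2 ≤
        3 * (‖g i s - h i s‖ ^ 2 + ‖h i s - hbar s‖ ^ 2 + ‖hbar s - gbar s‖ ^ 2) := by
      intro i
      have : g i s - gbar s = (g i s - h i s) + (h i s - hbar s) + (hbar s - gbar s) := by abel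
      rw [this]
      exact norm_add3_sq_le _ _ _
    have hsum : ∑ i : Fin n, 3 * (‖g i s - h i s‖ ^ 2 + ‖h i s - hbar s‖ ^ 2 + ‖hbar s - gbar s‖ ^ 2)
        = 3 * ((∑ i : Fin n, ‖g i s - h i s‖ ^ 2) + (∑ i : Fin n, ‖h i s - hbar s‖ ^ 2)
            + (n : ℝ) * ‖hbar s - gbar s‖ ^ 2) := by
      rw [Finset.sum_congr rfl (fun i _ => mul_add 3 _ _), Finset.sum_add_distrib]
      rw [Finset.sum_congr rfl (fun (i : Fin n) _ => mul_add 3 (‖g i s - h i s‖ ^ 2) _)]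
      rw [Finset.sum_add_distrib, ← Finset.mul_sum, ← Finset.mul_sum, Finset.sum_const,
        Finset.card_univ, Fintype.card_fin, nsmul_eq_mul]
      ring
    have hv := hvar s
    have hh := hhet s
    have hinv : (n : ℝ)⁻¹ * n = 1 := inv_mul_cancel₀ hn0.ne'
    calc (n : ℝ)⁻¹ * ∑ i : Fin n, ‖g i s - gbar s‖ ^ 2
        ≤ (n : ℝ)⁻¹ * ∑ i : Fin n, 3 * (‖g i s - h i s‖ ^ 2 + ‖h i s - hbar s‖ ^ 2 + ‖hbar s - gbar s‖ ^ 2) := by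
          apply mul_le_mul_of_nonneg_left _ (by positivity)
          exact Finset.sum_le_sum fun i _ => hpt i
      _ ≤ 3 * (2 * ν + ζ) := by
          rw [hsum]
          have : hbar s = (n : ℝ)⁻¹ • ∑ j : Fin n, h j s := rfl
          nlinarith [hthird, hv, hh]
  -- now combine
  calc (n : ℝ)⁻¹ * ∑ i : Fin n,
      ‖(η • ∑ s : Fin τ, g i s) - (n : ℝ)⁻¹ • ∑ j : Fin n, (η • ∑ s : Fin τ, g j s)‖ ^ 2
      = (n : ℝ)⁻¹ * ∑ i : Fin n, η ^ 2 * ‖∑ s : Fin τ, (g i s - gbar s)‖ ^ 2 := by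
        congr 1; apply Finset.sum_congr rfl; intro i _
        rw [key i, norm_smul, Real.norm_eq_abs, abs_of_pos hη, mul_pow]
    _ ≤ (n : ℝ)⁻¹ * ∑ i : Fin n, η ^ 2 * ((τ : ℝ) * ∑ s : Fin τ, ‖g i s - gbar s‖ ^ 2) := by
        apply mul_le_mul_of_nonneg_left _ (by positivity)
        apply Finset.sum_le_sum; intro i _
        exact mul_le_mul_of_nonneg_left (norm_sum_sq_le_card _) (by positivity)
    _ = η ^ 2 * (τ : ℝ) * ∑ s : Fin τ, ((n : ℝ)⁻¹ * ∑ i : Fin n, ‖g i s - gbar s‖ ^ 2) := by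
        simp only [Finset.mul_sum]
        rw [Finset.sum_comm]
        exact Finset.sum_congr rfl fun s _ => Finset.sum_congr rfl fun i _ => by ring
    _ ≤ η ^ 2 * (τ : ℝ) * ∑ s : Fin τ, 3 * (2 * ν + ζ) := by
        apply mul_le_mul_of_nonneg_left _ (by positivity)
        exact Finset.sum_le_sum fun s _ => step1 s
    _ = 3 * (τ : ℝ) ^ 2 * η ^ 2 * (2 * ν + ζ) := by
        rw [Finset.sum_const]; simp; ring
end

section
/- One-step propagation recursion. Let d ≥ 1, let G : ℝ^d → ℝ^d satisfy ‖G(x) − G(y)‖ ≤ μ‖x − y‖ for all x, y ∈ ℝ^d (for some μ ≥ 0), let τ ≥ 1 be a natural number, and let α ≥ 0 and η ≥ 0 be reals with η ≤ 1/(2τ). Let θ, θ*, Δ, g_B, g* ∈ ℝ^d and κ, ν̄ ≥ 0 satisfy: ‖Δ − η·g_B‖² ≤ κ; ‖g_B − G(θ)‖² ≤ τ²·ν̄; and ‖g* − G(θ*)‖² ≤ τ²·ν̄. Then ‖(θ − α·Δ) − (θ* − α·η·g*)‖² ≤ (2 + 3α²μ²)·‖θ − θ*‖² + 4α²·(κ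 + 2ν̄). -/
lemma one_step_aux (A P B C E : ℝ) (hA : 0 ≤ A) (hP : 0 ≤ P) (hB : 0 ≤ B)
    (hC : 0 ≤ C) (hE : 0 ≤ E) :
    (A + P + B + C + E) ^ 2 ≤ 2 * A ^ 2 + 12 * P ^ 2 + 4 * B ^ 2 + 16 * C ^ 2 + 16 * E ^ 2 := by
  nlinarith [sq_nonneg (A-6*P), sq_nonneg (A-2*B), sq_nonneg (A-8*C), sq_nonneg (A-8*E),
    sq_nonneg (3*P-B), sq_nonneg (3*P-4*C), sq_nonneg (3*P-4*E), sq_nonneg (B-4*C),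
    sq_nonneg (B-4*E), sq_nonneg (C-E), mul_nonneg hA hP, mul_nonneg hA hB,
    mul_nonneg hA hC, mul_nonneg hA hE, mul_nonneg hP hB, mul_nonneg hP hC,
    mul_nonneg hP hE, mul_nonneg hB hC, mul_nonneg hB hE, mul_nonneg hC hE]

set_option maxHeartbeats 1000000 in
/-- One-step propagation recursion (inequality (16) in the propagation-error proof):
if `G` is `μ`-Lipschitz, `‖Δ − η g_B‖² ≤ κ`, and the accumulated stochastic gradients
`g_B`, `g*` deviate from `G(θ)`, `G(θ*)` by at most `τ²ν̄` in squared norm, then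
`‖(θ − αΔ) − (θ* − αη g*)‖² ≤ (2 + 3α²μ²)‖θ − θ*‖² + 4α²(κ + 2ν̄)`. -/
theorem one_step_propagation
    (d : ℕ) (hd : 1 ≤ d)
    (G : EuclideanSpace ℝ (Fin d) → EuclideanSpace ℝ (Fin d))
    (μ : ℝ) (hμ : 0 ≤ μ)
    (hG : ∀ x y, ‖G x - G y‖ ≤ μ * ‖x - y‖)
    (τ : ℕ) (hτ : 1 ≤ τ)
    (α η : ℝ) (hα : 0 ≤ α) (hη : 0 ≤ η) (hη' : η ≤ 1 / (2 * τ))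
    (θ θs Δ gB gs : EuclideanSpace ℝ (Fin d))
    (κ ν : ℝ) (hκ : 0 ≤ κ) (hν : 0 ≤ ν)
    (hrob : ‖Δ - η • gB‖ ^ 2 ≤ κ)
    (hgB : ‖gB - G θ‖ ^ 2 ≤ (τ : ℝ) ^ 2 * ν)
    (hgs : ‖gs - G θs‖ ^ 2 ≤ (τ : ℝ) ^ 2 * ν) :
    ‖(θ - α • Δ) - (θs - (α * η) • gs)‖ ^ 2
      ≤ (2 + 3 * α ^ 2 * μ ^ 2) * ‖θ - θs‖ ^ 2 + 4 * α ^ 2 * (κ + 2 * ν) := by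
  set a := ‖θ - θs‖ with ha
  set b := ‖Δ - η • gB‖ with hb
  set c := ‖gB - G θ‖ with hc
  set e := ‖gs - G θs‖ with he
  set m := ‖G θ - G θs‖ with hm
  have hτpos : (0:ℝ) < τ := by positivity
  have hτ1 : (1:ℝ) ≤ τ := by exact_mod_cast hτ
  have hητ : η * τ ≤ 1 / 2 := by
    have h := mul_le_mul_of_nonneg_right hη' hτpos.le
    have h2 : (1 / (2 * (τ:ℝ))) * τ = 1 / 2 := by field_simp
    linarith [h2 ▸ h]
  have hη2 : η ≤ 1 / 2 := by nlinarith [mul_le_mul_of_nonneg_left hτ1 hη]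
  have hmn : m ≤ μ * a := hG θ θs
  have hmnn : 0 ≤ m := norm_nonneg _
  have key : (θ - α • Δ) - (θs - (α * η) • gs)
      = (θ - θs) - α • (Δ - η • gB) - (α * η) • (gB - G θ)
        - (α * η) • (G θ - G θs) + (α * η) • (gs - G θs) := by
    simp only [smul_sub, mul_smul]
    module
  have htri : ‖(θ - α • Δ) - (θs - (α * η) • gs)‖
      ≤ a + α * b + α * η * c + α * η * m + α * η * e := by
    rw [key]
    calc ‖(θ - θs) - α • (Δ - η • gB) - (α * η) • (gB - G θ)
        - (α * η) • (G θ - G θs) + (α * η) • (gs - G θs)‖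
        ≤ ‖(θ - θs) - α • (Δ - η • gB) - (α * η) • (gB - G θ)
          - (α * η) • (G θ - G θs)‖ + ‖(α * η) • (gs - G θs)‖ := norm_add_le _ _
      _ ≤ (‖(θ - θs) - α • (Δ - η • gB) - (α * η) • (gB - G θ)‖
          + ‖(α * η) • (G θ - G θs)‖) + ‖(α * η) • (gs - G θs)‖ := by
          gcongr; exact norm_sub_le _ _
      _ ≤ ((‖(θ - θs) - α • (Δ - η • gB)‖ + ‖(α * η) • (gB - G θ)‖)
          + ‖(α * η) • (G θ - G θs)‖) + ‖(α * η) • (gs - G θs)‖ := by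
          gcongr; exact norm_sub_le _ _
      _ ≤ (((‖θ - θs‖ + ‖α • (Δ - η • gB)‖) + ‖(α * η) • (gB - G θ)‖)
          + ‖(α * η) • (G θ - G θs)‖) + ‖(α * η) • (gs - G θs)‖ := by
          gcongr; exact norm_sub_le _ _
      _ = a + α * b + α * η * c + α * η * m + α * η * e := by
          rw [norm_smul, norm_smul, norm_smul, norm_smul]
          simp [abs_of_nonneg hα, abs_of_nonneg hη, abs_of_nonneg (mul_nonneg hα hη)]
          rfl
  have hbn : 0 ≤ b := norm_nonneg _
  have hcn : 0 ≤ c := norm_nonneg _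
  have hen : 0 ≤ e := norm_nonneg _
  have han : 0 ≤ a := norm_nonneg _
  have hNn : 0 ≤ ‖(θ - α • Δ) - (θs - (α * η) • gs)‖ := norm_nonneg _
  have h14 : (η * τ) ^ 2 ≤ 1 / 4 := by
    have := pow_le_pow_left₀ (mul_nonneg hη hτpos.le) hητ 2
    calc (η * τ) ^ 2 ≤ (1/2 : ℝ) ^ 2 := this
      _ = 1 / 4 := by norm_num
  have hc2 : (η * c) ^ 2 ≤ ν / 4 := by
    calc (η * c) ^ 2 = η ^ 2 * c ^ 2 := by ring
      _ ≤ η ^ 2 * ((τ:ℝ) ^ 2 * ν) := mul_le_mul_of_nonneg_left hgB (sq_nonneg η)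
      _ = (η * τ) ^ 2 * ν := by ring
      _ ≤ (1/4) * ν := mul_le_mul_of_nonneg_right h14 hν
      _ = ν / 4 := by ring
  have he2 : (η * e) ^ 2 ≤ ν / 4 := by
    calc (η * e) ^ 2 = η ^ 2 * e ^ 2 := by ring
      _ ≤ η ^ 2 * ((τ:ℝ) ^ 2 * ν) := mul_le_mul_of_nonneg_left hgs (sq_nonneg η)
      _ = (η * τ) ^ 2 * ν := by ring
      _ ≤ (1/4) * ν := mul_le_mul_of_nonneg_right h14 hν
      _ = ν / 4 := by ring
  have hs : ‖(θ - α • Δ) - (θs - (α * η) • gs)‖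
      ≤ a + α * μ * a / 2 + α * b + α * (η * c) + α * (η * e) := by
    refine htri.trans ?_
    have hP : α * η * m ≤ α * μ * a / 2 := by
      have h1 : α * η * m ≤ α * η * (μ * a) :=
        mul_le_mul_of_nonneg_left hmn (by positivity)
      nlinarith [mul_nonneg hμ han, mul_nonneg hα (mul_nonneg hμ han)]
    linarith [mul_le_mul_of_nonneg_left (le_refl (η * c)) hα]
  have hN2 : ‖(θ - α • Δ) - (θs - (α * η) • gs)‖ ^ 2
      ≤ (a + α * μ * a / 2 + α * b + α * (η * c) + α * (η * e)) ^ 2 :=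
    pow_le_pow_left₀ hNn hs 2
  have haux := one_step_aux a (α * μ * a / 2) (α * b) (α * (η * c)) (α * (η * e))
    han (by positivity) (mul_nonneg hα hbn) (mul_nonneg hα (mul_nonneg hη hcn))
    (mul_nonneg hα (mul_nonneg hη hen))
  have hB2 : 4 * (α * b) ^ 2 ≤ 4 * α ^ 2 * κ := by
    have := mul_le_mul_of_nonneg_left hrob (sq_nonneg α); nlinarith [this]
  have hC2 : 16 * (α * (η * c)) ^ 2 ≤ 4 * α ^ 2 * ν := by
    have := mul_le_mul_of_nonneg_left hc2 (sq_nonneg α); nlinarith [this]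
  have hE2 : 16 * (α * (η * e)) ^ 2 ≤ 4 * α ^ 2 * ν := by
    have := mul_le_mul_of_nonneg_left he2 (sq_nonneg α); nlinarith [this]
  have hP2 : 12 * (α * μ * a / 2) ^ 2 = 3 * α ^ 2 * μ ^ 2 * a ^ 2 := by ring
  have hexp : (2 + 3 * α ^ 2 * μ ^ 2) * a ^ 2 + 4 * α ^ 2 * (κ + 2 * ν)
      = 2 * a ^ 2 + 3 * α ^ 2 * μ ^ 2 * a ^ 2 + 4 * α ^ 2 * κ
        + (4 * α ^ 2 * ν + 4 * α ^ 2 * ν) := by ring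
  rw [hexp]
  linarith [hN2, haux]
end

section
/- Recursion amplification lemma. Let μ ∈ ℝ, C ≥ 0, T ∈ ℕ, and let α_1, …, α_T be reals with α_t ≥ 1 for every t. Let a_0, a_1, …, a_T be nonnegative reals with a_0 = 0 and a_t ≤ (2 + 3μ²α_t²)·a_{t−1} + α_t²·C for every t ∈ {1,…,T}. Then a_T ≤ φ(T) · (2 + 3μ²)^{φ(T)} · C, where φ(T) := Σ_{t=1}^T α_t² and the power is the real power function. -/
open Finset

lemma two_add_mul_le_rpow (m x : ℝ) (hm : 0 ≤ m) (hx : 1 ≤ x) :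
    2 + m * x ≤ (2 + m) ^ (x : ℝ) := by
  have h := one_add_mul_self_le_rpow_one_add (s := 1 + m) (by linarith) hx
  have : (1 + (1 + m)) = 2 + m := by ring
  rw [this] at h
  nlinarith [h]

/-- Recursion amplification lemma: if `a_0 = 0` and
`a_t ≤ (2 + 3μ²α_t²)·a_{t−1} + α_t²·C` with `α_t ≥ 1`, then
`a_T ≤ φ(T)·(2 + 3μ²)^{φ(T)}·C` where `φ(T) = Σ_{t=1}^T α_t²`. -/
theorem recursion_amplification
    (μ C : ℝ) (hC : 0 ≤ C) (T : ℕ)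
    (α : ℕ → ℝ) (hα : ∀ t, 1 ≤ t → t ≤ T → 1 ≤ α t)
    (a : ℕ → ℝ) (ha0 : a 0 = 0) (hpos : ∀ t, t ≤ T → 0 ≤ a t)
    (hrec : ∀ t, 1 ≤ t → t ≤ T →
      a t ≤ (2 + 3 * μ ^ 2 * (α t) ^ 2) * a (t - 1) + (α t) ^ 2 * C) :
    a T ≤ (∑ t ∈ Finset.Icc 1 T, (α t) ^ 2)
      * (2 + 3 * μ ^ 2) ^ (∑ t ∈ Finset.Icc 1 T, (α t) ^ 2 : ℝ) * C := by
  set B : ℝ := 2 + 3 * μ ^ 2 with hB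
  have hB2 : (2 : ℝ) ≤ B := by nlinarith [sq_nonneg μ]
  have key : ∀ n, n ≤ T →
      a n ≤ (∑ t ∈ Finset.Icc 1 n, (α t) ^ 2)
        * B ^ (∑ t ∈ Finset.Icc 1 n, (α t) ^ 2 : ℝ) * C := by
    intro n
    induction n with
    | zero => intro _; simp [ha0]
    | succ k ih =>
      intro hk
      have hkT : k ≤ T := Nat.le_of_succ_le hk
      have ihk := ih hkT
      set φ : ℝ := ∑ t ∈ Finset.Icc 1 k, (α t) ^ 2 with hφ
      have hφ0 : 0 ≤ φ := Finset.sum_nonneg fun t _ => sq_nonneg _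
      have hα1 : 1 ≤ α (k + 1) := hα (k + 1) (Nat.succ_le_succ (Nat.zero_le k)) hk
      set x : ℝ := (α (k + 1)) ^ 2 with hx
      have hx1 : 1 ≤ x := by nlinarith
      have hsum : (∑ t ∈ Finset.Icc 1 (k + 1), (α t) ^ 2) = φ + x := by
        rw [Finset.sum_Icc_succ_top (Nat.succ_le_succ (Nat.zero_le k))]
      rw [hsum]
      have hrec' := hrec (k + 1) (Nat.succ_le_succ (Nat.zero_le k)) hk
      simp only [Nat.add_sub_cancel] at hrec'
      have hBx : 2 + 3 * μ ^ 2 * x ≤ B ^ (x : ℝ) :=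
        two_add_mul_le_rpow (3 * μ ^ 2) x (by positivity) hx1
      have hak : 0 ≤ a k := hpos k hkT
      have hBpos : (0 : ℝ) < B := by linarith
      have hone : (1 : ℝ) ≤ B ^ (φ + x : ℝ) := by
        calc (1 : ℝ) = B ^ (0 : ℝ) := by simp
        _ ≤ B ^ (φ + x : ℝ) :=
          Real.rpow_le_rpow_of_exponent_le (by linarith) (by linarith)
      have step1 : (2 + 3 * μ ^ 2 * x) * a k ≤ B ^ (x : ℝ) * (φ * B ^ (φ : ℝ) * C) := by
        calc (2 + 3 * μ ^ 2 * x) * a k ≤ B ^ (x : ℝ) * a k :=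
              mul_le_mul_of_nonneg_right hBx hak
        _ ≤ B ^ (x : ℝ) * (φ * B ^ (φ : ℝ) * C) := by
              apply mul_le_mul_of_nonneg_left ihk
              positivity
      have hsplit : B ^ (x : ℝ) * (φ * B ^ (φ : ℝ) * C) = φ * B ^ (φ + x : ℝ) * C := by
        rw [Real.rpow_add hBpos]; ring
      have step2 : x * C ≤ x * B ^ (φ + x : ℝ) * C := by
        have : x * 1 * C ≤ x * B ^ (φ + x : ℝ) * C := by
          apply mul_le_mul_of_nonneg_right _ hC
          exact mul_le_mul_of_nonneg_left hone (by linarith)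
        linarith [this]
      calc a (k + 1) ≤ (2 + 3 * μ ^ 2 * x) * a k + x * C := hrec'
      _ ≤ φ * B ^ (φ + x : ℝ) * C + x * B ^ (φ + x : ℝ) * C := by
            rw [hsplit] at step1; linarith
      _ = (φ + x) * B ^ (φ + x : ℝ) * C := by ring
  exact key T le_rfl
end

section
/- Lemma 1 (κ-robustness of AlignIns, probabilistic form). Let (Ω, P) be a probability space, let ε > 0 be real, let n, m be naturals with n > 1 and 0 ≤ m < n/(3 + ε), and let d ≥ 1. Let Δ_1, …, Δ_n : Ω → ℝ^d be square-integrable random vectors, let B ⊆ {1,…,n} with |B| = n − m, and let S ⊆ {1,…,n} be nonempty with |S| ≥ n − 2m. Suppose there is a real c ≥ 0 such that almost surely ‖Δ_i‖ ≤ c for every i ∈ S, and there are reals ν̄, ζ̄ ≥ 0 with (1/|B|) · Σ_{i∈B} E‖Δ_i − Δ̄_B‖² ≤ 2ν̄ + ζ̄. Then E‖(1/|S|) · Σ_{i∈S} Δ_i − Δ̄_B‖² ≤ (1 + m/(n − 2m)) · ((2/ε + 1)·(2ν̄ + ζ̄) + 8c²). -/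
open Finset MeasureTheory

lemma avg_norm_sq_le_aux {E : Type*} [NormedAddCommGroup E] [NormedSpace ℝ E] {ι : Type*}
    (s : Finset ι) (hs : s.Nonempty) (v : ι → E) :
    ‖(s.card : ℝ)⁻¹ • ∑ i ∈ s, v i‖ ^ 2 ≤ (s.card : ℝ)⁻¹ * ∑ i ∈ s, ‖v i‖ ^ 2 := by
  have hcard : (0:ℝ) < s.card := by exact_mod_cast hs.card_pos
  have h1 : ‖(s.card : ℝ)⁻¹ • ∑ i ∈ s, v i‖ ≤ (s.card : ℝ)⁻¹ * ∑ i ∈ s, ‖v i‖ := by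
    rw [norm_smul, Real.norm_eq_abs, abs_of_nonneg (by positivity)]
    exact mul_le_mul_of_nonneg_left (norm_sum_le _ _) (by positivity)
  have h2 : (∑ i ∈ s, ‖v i‖) ^ 2 ≤ (s.card : ℝ) * ∑ i ∈ s, ‖v i‖ ^ 2 :=
    sq_sum_le_card_mul_sum_sq
  calc ‖(s.card : ℝ)⁻¹ • ∑ i ∈ s, v i‖ ^ 2
      ≤ ((s.card : ℝ)⁻¹ * ∑ i ∈ s, ‖v i‖) ^ 2 :=
        pow_le_pow_left₀ (norm_nonneg _) h1 2
    _ = ((s.card : ℝ)⁻¹)^2 * (∑ i ∈ s, ‖v i‖) ^ 2 := by ring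
    _ ≤ ((s.card : ℝ)⁻¹)^2 * ((s.card : ℝ) * ∑ i ∈ s, ‖v i‖ ^ 2) :=
        mul_le_mul_of_nonneg_left h2 (by positivity)
    _ = (s.card : ℝ)⁻¹ * ∑ i ∈ s, ‖v i‖ ^ 2 := by
        field_simp

lemma avg_sub_eq {E : Type*} [NormedAddCommGroup E] [NormedSpace ℝ E] {ι : Type*}
    (s : Finset ι) (hs : s.Nonempty) (v : ι → E) (x : E) :
    (s.card : ℝ)⁻¹ • ∑ i ∈ s, v i - x = (s.card : ℝ)⁻¹ • ∑ i ∈ s, (v i - x) := by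
  have hcard : ((s.card : ℝ)) ≠ 0 := by
    exact_mod_cast hs.card_pos.ne'
  rw [Finset.sum_sub_distrib, smul_sub, Finset.sum_const]
  congr 1
  rw [← Nat.cast_smul_eq_nsmul ℝ, smul_smul, inv_mul_cancel₀ hcard, one_smul]

lemma sub_avg_eq {E : Type*} [NormedAddCommGroup E] [NormedSpace ℝ E] {ι : Type*}
    (s : Finset ι) (hs : s.Nonempty) (v : ι → E) (x : E) :
    x - (s.card : ℝ)⁻¹ • ∑ i ∈ s, v i = (s.card : ℝ)⁻¹ • ∑ i ∈ s, (x - v i) := by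
  rw [← neg_sub, avg_sub_eq s hs v x, ← smul_neg, ← Finset.sum_neg_distrib]
  simp [neg_sub]

set_option maxHeartbeats 1000000 in
/-- Lemma 1 (κ-robustness of AlignIns, probabilistic form): under an almost-sure bound
`c` on the norms of the selected updates and expected benign divergence at most
`2ν̄ + ζ̄`, the expected squared distance between the selected average and the benign
average is at most `(1 + m/(n − 2m))·((2/ε + 1)(2ν̄ + ζ̄) + 8c²)`. -/
theorem alignins_kappa_robust_probabilistic
    {Ω : Type*} [MeasurableSpace Ω] (P : Measure Ω) [IsProbabilityMeasure P]
    (ε : ℝ) (hε : 0 < ε)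
    (n m d : ℕ) (hn : 1 < n) (hm : (m : ℝ) < (n : ℝ) / (3 + ε)) (hd : 1 ≤ d)
    (Δ : Fin n → Ω → EuclideanSpace ℝ (Fin d))
    (hΔ : ∀ i, MemLp (Δ i) 2 P)
    (B S : Finset (Fin n))
    (hB : B.card = n - m)
    (hSne : S.Nonempty) (hScard : n - 2 * m ≤ S.card)
    (c : ℝ) (hc : 0 ≤ c)
    (hbound : ∀ᵐ ω ∂P, ∀ i ∈ S, ‖Δ i ω‖ ≤ c)
    (ν ζ : ℝ) (hν : 0 ≤ ν) (hζ : 0 ≤ ζ)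
    (hdiv : (B.card : ℝ)⁻¹ * ∑ i ∈ B,
        ∫ ω, ‖Δ i ω - (B.card : ℝ)⁻¹ • ∑ j ∈ B, Δ j ω‖ ^ 2 ∂P ≤ 2 * ν + ζ) :
    ∫ ω, ‖(S.card : ℝ)⁻¹ • ∑ i ∈ S, Δ i ω - (B.card : ℝ)⁻¹ • ∑ j ∈ B, Δ j ω‖ ^ 2 ∂P
      ≤ (1 + (m : ℝ) / ((n : ℝ) - 2 * m)) * ((2 / ε + 1) * (2 * ν + ζ) + 8 * c ^ 2) := by
  -- basic arithmetic facts
  have hε3 : (0:ℝ) < 3 + ε := by linarith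
  have hm3 : (3 + ε) * (m:ℝ) < (n:ℝ) := by
    rw [lt_div_iff₀ hε3] at hm; linarith [hm]
  have hM0 : (0:ℝ) ≤ (m:ℝ) := Nat.cast_nonneg m
  have hmn3 : 3 * m < n := by
    have : (3:ℝ) * m < (n:ℝ) := by nlinarith
    exact_mod_cast this
  have hmn2 : 2 * m ≤ n := by omega
  have hmn : m ≤ n := by omega
  have hN2M : (0:ℝ) < (n:ℝ) - 2 * m := by
    have : ((2*m : ℕ) : ℝ) < (n:ℝ) := by exact_mod_cast (by omega : 2*m < n)
    push_cast at this; linarith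
  -- card facts
  have hBcard : ((B.card : ℝ)) = (n:ℝ) - m := by
    rw [hB]; push_cast [Nat.cast_sub hmn]; ring
  have hBpos : 0 < B.card := by rw [hB]; omega
  have hBne : B.Nonempty := Finset.card_pos.mp hBpos
  have hScardR : (n:ℝ) - 2 * m ≤ (S.card : ℝ) := by
    have : ((n - 2*m : ℕ) : ℝ) ≤ (S.card : ℝ) := by exact_mod_cast hScard
    rwa [Nat.cast_sub hmn2, Nat.cast_mul, Nat.cast_ofNat] at this
  have hSpos : (0:ℝ) < S.card := by exact_mod_cast hSne.card_pos
  -- the intersection T = S ∩ B and difference U = S \ B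
  have hT1 : n - 3 * m ≤ (S ∩ B).card := by
    have h1 := Finset.card_inter_add_card_union S B
    have h2 : (S ∪ B).card ≤ n := by
      simpa using Finset.card_le_card (Finset.subset_univ (S ∪ B))
    omega
  have hTpos : 0 < (S ∩ B).card := by omega
  have hTne : (S ∩ B).Nonempty := Finset.card_pos.mp hTpos
  have hTcardR : (n:ℝ) - 3 * m ≤ ((S ∩ B).card : ℝ) := by
    have : ((n - 3*m : ℕ) : ℝ) ≤ ((S ∩ B).card : ℝ) := by exact_mod_cast hT1
    rwa [Nat.cast_sub (by omega), Nat.cast_mul, Nat.cast_ofNat] at this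
  have hU : (S \ B).card ≤ m := by
    have h1 : (S \ B).card ≤ (Finset.univ \ B).card :=
      Finset.card_le_card (Finset.sdiff_subset_sdiff (Finset.subset_univ S) le_rfl)
    have h2 : (Finset.univ \ B).card = n - B.card := by
      rw [Finset.card_sdiff_of_subset (Finset.subset_univ B)]; simp
    omega
  have hUcardR : ((S \ B).card : ℝ) ≤ (m:ℝ) := by exact_mod_cast hU
  have hSTU : (S ∩ B).card + (S \ B).card = S.card :=
    Finset.card_inter_add_card_sdiff S B
  -- measure-theoretic preliminaries
  have hAm : MemLp (fun ω => (B.card : ℝ)⁻¹ • ∑ j ∈ B, Δ j ω) 2 P := by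
    have h1 : MemLp (fun ω => ∑ j ∈ B, Δ j ω) 2 P :=
      memLp_finset_sum B (fun i _ => hΔ i)
    exact h1.const_smul ((B.card : ℝ)⁻¹)
  have hDm : ∀ i, MemLp (fun ω => Δ i ω - (B.card : ℝ)⁻¹ • ∑ j ∈ B, Δ j ω) 2 P :=
    fun i => (hΔ i).sub hAm
  have hInt : ∀ i, Integrable
      (fun ω => ‖Δ i ω - (B.card : ℝ)⁻¹ • ∑ j ∈ B, Δ j ω‖ ^ 2) P := fun i =>
    (memLp_two_iff_integrable_sq_norm (hDm i).aestronglyMeasurable).mp (hDm i)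
  set g : Fin n → ℝ :=
    fun i => ∫ ω, ‖Δ i ω - (B.card : ℝ)⁻¹ • ∑ j ∈ B, Δ j ω‖ ^ 2 ∂P with hg
  have hg0 : ∀ i, 0 ≤ g i := fun i => integral_nonneg (fun ω => by positivity)
  -- Step A : Jensen on the selected average
  have stepA : ∫ ω, ‖(S.card : ℝ)⁻¹ • ∑ i ∈ S, Δ i ω -
      (B.card : ℝ)⁻¹ • ∑ j ∈ B, Δ j ω‖ ^ 2 ∂P ≤ (S.card : ℝ)⁻¹ * ∑ i ∈ S, g i := by
    have hpt : ∀ ω, ‖(S.card : ℝ)⁻¹ • ∑ i ∈ S, Δ i ω -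
        (B.card : ℝ)⁻¹ • ∑ j ∈ B, Δ j ω‖ ^ 2 ≤
        (S.card : ℝ)⁻¹ * ∑ i ∈ S, ‖Δ i ω - (B.card : ℝ)⁻¹ • ∑ j ∈ B, Δ j ω‖ ^ 2 := by
      intro ω
      rw [avg_sub_eq S hSne (fun i => Δ i ω) _]
      exact avg_norm_sq_le_aux S hSne _
    have h1 : ∫ ω, ‖(S.card : ℝ)⁻¹ • ∑ i ∈ S, Δ i ω -
        (B.card : ℝ)⁻¹ • ∑ j ∈ B, Δ j ω‖ ^ 2 ∂P ≤
        ∫ ω, (S.card : ℝ)⁻¹ * ∑ i ∈ S,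
          ‖Δ i ω - (B.card : ℝ)⁻¹ • ∑ j ∈ B, Δ j ω‖ ^ 2 ∂P := by
      refine integral_mono_of_nonneg (ae_of_all _ fun ω => by positivity)
        (((integrable_finset_sum S fun i _ => hInt i).const_mul _)) (ae_of_all _ hpt)
    calc _ ≤ _ := h1
      _ = (S.card : ℝ)⁻¹ * ∑ i ∈ S, g i := by
        rw [integral_const_mul, integral_finset_sum S fun i _ => hInt i]
  -- Step B : benign divergence bound
  have stepB : ∑ i ∈ S ∩ B, g i ≤ ((n:ℝ) - m) * (2 * ν + ζ) := by
    have h1 : ∑ i ∈ S ∩ B, g i ≤ ∑ i ∈ B, g i :=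
      Finset.sum_le_sum_of_subset_of_nonneg Finset.inter_subset_right
        (fun i _ _ => hg0 i)
    have h2 : ∑ i ∈ B, g i ≤ ((n:ℝ) - m) * (2 * ν + ζ) := by
      have hBne0 : ((B.card : ℝ)) ≠ 0 := by positivity
      calc ∑ i ∈ B, g i = (B.card : ℝ) * ((B.card : ℝ)⁻¹ * ∑ i ∈ B, g i) := by
            field_simp
        _ ≤ (B.card : ℝ) * (2 * ν + ζ) := by
            apply mul_le_mul_of_nonneg_left hdiv (by positivity)
        _ = ((n:ℝ) - m) * (2 * ν + ζ) := by rw [hBcard]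
    linarith
  -- Step C : bound on the outliers
  have haT : (0:ℝ) < ((S ∩ B).card : ℝ) := by exact_mod_cast hTpos
  have stepC : ∀ i ∈ S \ B, g i ≤ 8 * c ^ 2 +
      2 * (((S ∩ B).card : ℝ))⁻¹ * ∑ j ∈ S ∩ B, g j := by
    intro i hi
    have hiS : i ∈ S := (Finset.mem_sdiff.mp hi).1
    have hpt : ∀ᵐ ω ∂P, ‖Δ i ω - (B.card : ℝ)⁻¹ • ∑ j ∈ B, Δ j ω‖ ^ 2 ≤
        8 * c ^ 2 + 2 * (((S ∩ B).card : ℝ))⁻¹ *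
          ∑ j ∈ S ∩ B, ‖Δ j ω - (B.card : ℝ)⁻¹ • ∑ k ∈ B, Δ k ω‖ ^ 2 := by
      filter_upwards [hbound] with ω hb
      set u : EuclideanSpace ℝ (Fin d) :=
        (((S ∩ B).card : ℝ))⁻¹ • ∑ j ∈ S ∩ B, Δ j ω with hu
      have h2c : ‖Δ i ω - u‖ ≤ 2 * c := by
        rw [hu, sub_avg_eq (S ∩ B) hTne (fun j => Δ j ω) _]
        have h1 : ‖(((S ∩ B).card : ℝ))⁻¹ • ∑ j ∈ S ∩ B, (Δ i ω - Δ j ω)‖ ≤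
            (((S ∩ B).card : ℝ))⁻¹ * ∑ j ∈ S ∩ B, ‖Δ i ω - Δ j ω‖ := by
          rw [norm_smul, Real.norm_eq_abs, abs_of_nonneg (by positivity)]
          exact mul_le_mul_of_nonneg_left (norm_sum_le _ _) (by positivity)
        have h2 : ∑ j ∈ S ∩ B, ‖Δ i ω - Δ j ω‖ ≤ ((S ∩ B).card : ℝ) * (2 * c) := by
          calc ∑ j ∈ S ∩ B, ‖Δ i ω - Δ j ω‖ ≤ ∑ _j ∈ S ∩ B, (2 * c) := by
                refine Finset.sum_le_sum fun j hj => ?_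
                have hjS : j ∈ S := (Finset.mem_inter.mp hj).1
                calc ‖Δ i ω - Δ j ω‖ ≤ ‖Δ i ω‖ + ‖Δ j ω‖ := norm_sub_le _ _
                  _ ≤ 2 * c := by linarith [hb i hiS, hb j hjS]
            _ = ((S ∩ B).card : ℝ) * (2 * c) := by
                rw [Finset.sum_const, nsmul_eq_mul]
        calc ‖(((S ∩ B).card : ℝ))⁻¹ • ∑ j ∈ S ∩ B, (Δ i ω - Δ j ω)‖
            ≤ (((S ∩ B).card : ℝ))⁻¹ * ∑ j ∈ S ∩ B, ‖Δ i ω - Δ j ω‖ := h1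
          _ ≤ (((S ∩ B).card : ℝ))⁻¹ * (((S ∩ B).card : ℝ) * (2 * c)) :=
              mul_le_mul_of_nonneg_left h2 (by positivity)
          _ = 2 * c := by field_simp
      have huA : ‖u - (B.card : ℝ)⁻¹ • ∑ k ∈ B, Δ k ω‖ ^ 2 ≤
          (((S ∩ B).card : ℝ))⁻¹ *
            ∑ j ∈ S ∩ B, ‖Δ j ω - (B.card : ℝ)⁻¹ • ∑ k ∈ B, Δ k ω‖ ^ 2 := by
        rw [hu, avg_sub_eq (S ∩ B) hTne (fun j => Δ j ω) _]
        exact avg_norm_sq_le_aux (S ∩ B) hTne _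
      have htri : ‖Δ i ω - (B.card : ℝ)⁻¹ • ∑ k ∈ B, Δ k ω‖ ≤
          ‖Δ i ω - u‖ + ‖u - (B.card : ℝ)⁻¹ • ∑ k ∈ B, Δ k ω‖ := by
        have h := norm_add_le (Δ i ω - u) (u - (B.card : ℝ)⁻¹ • ∑ k ∈ B, Δ k ω)
        rwa [sub_add_sub_cancel] at h
      nlinarith [norm_nonneg (Δ i ω - u),
        norm_nonneg (u - (B.card : ℝ)⁻¹ • ∑ k ∈ B, Δ k ω),
        norm_nonneg (Δ i ω - (B.card : ℝ)⁻¹ • ∑ k ∈ B, Δ k ω),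
        sq_nonneg (‖Δ i ω - u‖ - ‖u - (B.card : ℝ)⁻¹ • ∑ k ∈ B, Δ k ω‖)]
    have hRint : Integrable (fun ω => 8 * c ^ 2 + 2 * (((S ∩ B).card : ℝ))⁻¹ *
        ∑ j ∈ S ∩ B, ‖Δ j ω - (B.card : ℝ)⁻¹ • ∑ k ∈ B, Δ k ω‖ ^ 2) P :=
      (integrable_const _).add
        ((integrable_finset_sum (S ∩ B) fun j _ => hInt j).const_mul _)
    calc g i ≤ ∫ ω, (8 * c ^ 2 + 2 * (((S ∩ B).card : ℝ))⁻¹ *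
          ∑ j ∈ S ∩ B, ‖Δ j ω - (B.card : ℝ)⁻¹ • ∑ k ∈ B, Δ k ω‖ ^ 2) ∂P :=
        integral_mono_of_nonneg (ae_of_all _ fun ω => by positivity) hRint hpt
      _ = 8 * c ^ 2 + 2 * (((S ∩ B).card : ℝ))⁻¹ * ∑ j ∈ S ∩ B, g j := by
        rw [integral_add (integrable_const _)
            ((integrable_finset_sum (S ∩ B) fun j _ => hInt j).const_mul _),
          integral_const, integral_const_mul,
          integral_finset_sum (S ∩ B) fun j _ => hInt j]
        simp
        exact Or.inl rfl
  -- combine the sums over S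
  have hsum : ∑ i ∈ S, g i ≤ (∑ j ∈ S ∩ B, g j) + ((S \ B).card : ℝ) *
      (8 * c ^ 2 + 2 * (((S ∩ B).card : ℝ))⁻¹ * ∑ j ∈ S ∩ B, g j) := by
    have hsplit : ∑ i ∈ S, g i = ∑ i ∈ S ∩ B, g i + ∑ i ∈ S \ B, g i := by
      rw [← Finset.sum_sdiff (Finset.inter_subset_left : S ∩ B ⊆ S),
        Finset.sdiff_inter_self_left, add_comm]
    have hout : ∑ i ∈ S \ B, g i ≤ ((S \ B).card : ℝ) *
        (8 * c ^ 2 + 2 * (((S ∩ B).card : ℝ))⁻¹ * ∑ j ∈ S ∩ B, g j) := by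
      calc ∑ i ∈ S \ B, g i ≤ ∑ _i ∈ S \ B,
            (8 * c ^ 2 + 2 * (((S ∩ B).card : ℝ))⁻¹ * ∑ j ∈ S ∩ B, g j) :=
            Finset.sum_le_sum stepC
        _ = _ := by rw [Finset.sum_const, nsmul_eq_mul]
    linarith
  -- final arithmetic
  set a : ℝ := ((S ∩ B).card : ℝ)
  set b : ℝ := ((S \ B).card : ℝ)
  set sc : ℝ := ((S.card : ℕ) : ℝ)
  set TT : ℝ := ∑ j ∈ S ∩ B, g j with hTT
  set D : ℝ := 2 * ν + ζ with hD
  have hseq : sc = a + b := by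
    show ((S.card : ℕ) : ℝ) = ((S ∩ B).card : ℝ) + ((S \ B).card : ℝ)
    exact_mod_cast hSTU.symm
  have hTT0 : 0 ≤ TT := Finset.sum_nonneg fun j _ => hg0 j
  have hD0 : 0 ≤ D := by rw [hD]; linarith
  have hεb : ε * b ≤ a := by
    have h1 : ε * b ≤ ε * m := mul_le_mul_of_nonneg_left hUcardR hε.le
    have h2 : ε * m ≤ (n:ℝ) - 3 * m := by nlinarith
    linarith
  have hba : a⁻¹ * b ≤ ε⁻¹ := by
    have h : b / a ≤ 1 / ε := (div_le_div_iff₀ haT hε).mpr (by linarith)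
    calc a⁻¹ * b = b / a := by ring
      _ ≤ 1 / ε := h
      _ = ε⁻¹ := one_div ε
  have key1 : TT + b * (8 * c ^ 2 + 2 * a⁻¹ * TT) ≤
      TT * (1 + 2 * ε⁻¹) + sc * (8 * c ^ 2) := by
    have h1 : 2 * TT * (a⁻¹ * b) ≤ 2 * TT * ε⁻¹ :=
      mul_le_mul_of_nonneg_left hba (by linarith)
    have hb0 : (0:ℝ) ≤ b := Nat.cast_nonneg _
    have h3 : b * (8 * c ^ 2) ≤ sc * (8 * c ^ 2) := by nlinarith
    calc TT + b * (8 * c ^ 2 + 2 * a⁻¹ * TT)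
        = TT + b * (8 * c ^ 2) + 2 * TT * (a⁻¹ * b) := by ring
      _ ≤ TT + sc * (8 * c ^ 2) + 2 * TT * ε⁻¹ := by linarith
      _ = TT * (1 + 2 * ε⁻¹) + sc * (8 * c ^ 2) := by ring
  have hsinv : sc⁻¹ ≤ ((n:ℝ) - 2 * m)⁻¹ := by
    apply inv_anti₀ hN2M hScardR
  have hTTfin : sc⁻¹ * TT ≤ ((n:ℝ) - 2 * m)⁻¹ * (((n:ℝ) - m) * D) := by
    calc sc⁻¹ * TT ≤ ((n:ℝ) - 2 * m)⁻¹ * TT :=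
        mul_le_mul_of_nonneg_right hsinv hTT0
      _ ≤ ((n:ℝ) - 2 * m)⁻¹ * (((n:ℝ) - m) * D) :=
        mul_le_mul_of_nonneg_left stepB (by positivity)
  have hfrac : 1 + (m:ℝ) / ((n:ℝ) - 2 * m) = ((n:ℝ) - m) / ((n:ℝ) - 2 * m) := by
    rw [one_add_div hN2M.ne']
    ring
  have h8 : 8 * c ^ 2 ≤ ((n:ℝ) - m) / ((n:ℝ) - 2 * m) * (8 * c ^ 2) := by
    have h1 : (1:ℝ) ≤ ((n:ℝ) - m) / ((n:ℝ) - 2 * m) := by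
      rw [le_div_iff₀ hN2M]; linarith
    nlinarith [sq_nonneg c]
  have heq : ((n:ℝ) - 2 * m)⁻¹ * (((n:ℝ) - m) * D) * (1 + 2 * ε⁻¹) =
      ((n:ℝ) - m) / ((n:ℝ) - 2 * m) * ((2 / ε + 1) * D) := by
    field_simp; ring
  calc ∫ ω, ‖(S.card : ℝ)⁻¹ • ∑ i ∈ S, Δ i ω -
        (B.card : ℝ)⁻¹ • ∑ j ∈ B, Δ j ω‖ ^ 2 ∂P
      ≤ sc⁻¹ * ∑ i ∈ S, g i := stepA
    _ ≤ sc⁻¹ * (TT + b * (8 * c ^ 2 + 2 * a⁻¹ * TT)) :=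
        mul_le_mul_of_nonneg_left hsum (by positivity)
    _ ≤ sc⁻¹ * (TT * (1 + 2 * ε⁻¹) + sc * (8 * c ^ 2)) :=
        mul_le_mul_of_nonneg_left key1 (by positivity)
    _ = sc⁻¹ * TT * (1 + 2 * ε⁻¹) + 8 * c ^ 2 := by
        have hsne0 : sc ≠ 0 := by positivity
        field_simp
    _ ≤ ((n:ℝ) - 2 * m)⁻¹ * (((n:ℝ) - m) * D) * (1 + 2 * ε⁻¹) + 8 * c ^ 2 := by
        have hpos : (0:ℝ) ≤ 1 + 2 * ε⁻¹ := by positivity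
        nlinarith [hTTfin]
    _ ≤ (1 + (m:ℝ) / ((n:ℝ) - 2 * m)) * ((2 / ε + 1) * (2 * ν + ζ) + 8 * c ^ 2) := by
        rw [hfrac, heq, ← hD, mul_add]
        linarith [h8]
end
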